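/- arXiv:2601.07135 — 8 statements merged into one kernel-verified Lean document; each statement's English description precedes it below -/
import Mathlib

section
/- Let A, B be finite subsets of ℤ_M with A ⊕ B = ℤ_M (i.e., every element of ℤ_M is uniquely a sum a + b with a ∈ A, b ∈ B). Then |A| · |B| = M and Div(A) ∩ Div(B) = {M}, where Div(E) = {gcd(a - a', M) : a, a' ∈ E}. Conversely, if |A| · |B| = M and Div(A) ∩ Div(B) = {M}, then A ⊕ B = ℤ_M. -/
open Finset

/-- `A ⊕ B = ℤ_M`: every element of `ℤ_M` has a unique representation `a + b`
with `a ∈ A`, `b ∈ B`. -/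
def Tiles {M : ℕ} (A B : Finset (ZMod M)) : Prop :=
  ∀ g : ZMod M, ∃! ab : ZMod M × ZMod M, ab.1 ∈ A ∧ ab.2 ∈ B ∧ ab.1 + ab.2 = g

/-- The division set `Div(E) = {gcd(a - a', M) : a, a' ∈ E}`. -/
def DivSet {M : ℕ} (E : Finset (ZMod M)) : Set ℕ :=
  {d | ∃ a ∈ E, ∃ b ∈ E, Nat.gcd ((a - b).val) M = d}

/-!
Count the representations `g = k • a + b` with `a ∈ A`, `b ∈ B`. The heart of the proof is
Tijdeman's dilation theorem: if every count for `k` is `1` and `p ∤ |A|` is prime, then in `𝔽_p[G]`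
the Frobenius identity `(∑_A X^{k a})^p = ∑_A X^{p k a}` together with
`∑_A X^{k a} · ∑_G X^g = |A| ∑_G X^g` and `|A|^{p-1} ≡ 1` shows that every count for `p k` is
`≡ 1 (mod p)`, hence positive; since the counts add up to `|A| |B| = |G|`, they are all `1`.
Iterating over the prime factors, `k A ⊕ B = G` for every `k` coprime to `|A|`.

In `ℤ_M`, two differences `a - a'` and `b - b'` with the same gcd with `M` differ by a unit `u`,
so `u a + b' = u a' + b`, and dilating by `u` forces `a = a'`. Conversely, a collision
`a + b = a' + b'` puts `gcd(a - a', M)` into both division sets, and when `|A| |B| = M` the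
injectivity of `(a, b) ↦ a + b` is already bijectivity.
-/

namespace Tiling

variable {G : Type*} [AddCommGroup G]

def repCount [DecidableEq G] (k : ℕ) (A B : Finset G) (g : G) : ℕ :=
  #{x ∈ A ×ˢ B | k • x.1 + x.2 = g}

theorem repCount_le_one_iff_injOn [DecidableEq G] {k : ℕ} {A B : Finset G} :
    (∀ g, repCount k A B g ≤ 1) ↔ Set.InjOn (fun x : G × G ↦ k • x.1 + x.2) (A ×ˢ B) := by
  simp only [repCount, card_le_one, mem_filter, Set.InjOn, Set.mem_prod, mem_coe, mem_product]
  exact ⟨fun h x hx y hy hxy ↦ h _ x ⟨hx, rfl⟩ y ⟨hy, hxy.symm⟩,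
    fun h g x hx y hy ↦ h hx.1 hy.1 (hx.2.trans hy.2.symm)⟩

theorem tiles_iff_forall_repCount_eq_one {M : ℕ} {A B : Finset (ZMod M)} :
    Tiles A B ↔ ∀ g, repCount 1 A B g = 1 := by
  simp only [Tiles, repCount, card_eq_one, one_nsmul]
  refine forall_congr' fun g ↦ ⟨fun ⟨x, hx, hu⟩ ↦ ⟨x, ?_⟩, fun ⟨x, hx⟩ ↦ ?_⟩
  · ext y
    simp only [mem_filter, mem_product, mem_singleton]
    exact ⟨fun ⟨⟨h1, h2⟩, h3⟩ ↦ hu y ⟨h1, h2, h3⟩, by rintro rfl; exact ⟨⟨hx.1, hx.2.1⟩, hx.2.2⟩⟩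
  · have hmem : ∀ y, (y.1 ∈ A ∧ y.2 ∈ B ∧ y.1 + y.2 = g) ↔ y = x := fun y ↦ by
      simpa only [mem_filter, mem_product, mem_singleton, and_assoc] using Finset.ext_iff.1 hx y
    exact ⟨x, (hmem x).2 rfl, fun y hy ↦ (hmem y).1 hy⟩

section GroupAlgebra

open AddMonoidAlgebra

variable (p : ℕ) [Fact p.Prime]

noncomputable def dilatedSum (k : ℕ) (A : Finset G) : AddMonoidAlgebra (ZMod p) G :=
  ∑ a ∈ A, single (k • a) 1

theorem dilatedSum_pow_char (k : ℕ) (A : Finset G) :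
    dilatedSum p k A ^ p = dilatedSum p (p * k) A := by
  have : CharP (AddMonoidAlgebra (ZMod p) G) p := charP_of_injective_algebraMap' (ZMod p) p
  simp only [dilatedSum, sum_pow_char, single_pow, one_pow, mul_nsmul']

theorem coeff_dilatedSum_mul [DecidableEq G] (k : ℕ) (A B : Finset G) (g : G) :
    (dilatedSum p k A * dilatedSum p 1 B).coeff g = repCount k A B g := by
  simp only [dilatedSum, sum_mul_sum, single_mul_single, mul_one, one_nsmul, ← sum_product',
    coeff_sum, coeff_single, Finsupp.finsetSum_apply, Finsupp.single_apply, sum_boole, repCount]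

variable [Fintype G]

theorem coeff_dilatedSum_univ (g : G) : (dilatedSum p 1 (univ : Finset G)).coeff g = 1 := by
  simp [dilatedSum]

theorem dilatedSum_pow_mul_dilatedSum_univ (k n : ℕ) (A : Finset G) :
    dilatedSum p k A ^ n * dilatedSum p 1 univ = (#A ^ n) • dilatedSum p 1 univ := by
  have htranslate (h : G) : single h 1 * dilatedSum p 1 univ = dilatedSum p 1 univ := by
    simp only [dilatedSum, mul_sum, single_mul_single, one_mul, one_nsmul]
    exact Fintype.sum_equiv (Equiv.addLeft h) _ _ fun _ ↦ rfl
  induction n with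
  | zero => rw [pow_zero, one_mul, pow_zero, one_smul]
  | succ n ih =>
    rw [pow_succ', mul_assoc, ih, mul_smul_comm, dilatedSum, sum_mul,
      sum_congr rfl fun a _ ↦ htranslate (k • a), sum_const, smul_smul, pow_succ]

end GroupAlgebra

variable [Fintype G] [DecidableEq G]

theorem sum_repCount (k : ℕ) (A B : Finset G) : ∑ g, repCount k A B g = #A * #B :=
  (card_product A B ▸ card_eq_sum_card_fiberwise fun _ _ ↦ mem_univ _).symm

theorem card_mul_card_eq_of_forall_repCount_eq_one {k : ℕ} {A B : Finset G}
    (h : ∀ g, repCount k A B g = 1) : #A * #B = Fintype.card G := by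
  rw [← sum_repCount k, sum_congr rfl fun g _ ↦ h g, sum_const, card_univ, smul_eq_mul, mul_one]

theorem forall_repCount_eq_one_iff_le_one {k : ℕ} {A B : Finset G}
    (hcard : #A * #B = Fintype.card G) :
    (∀ g, repCount k A B g = 1) ↔ ∀ g, repCount k A B g ≤ 1 := by
  refine ⟨fun h g ↦ (h g).le, fun h g ↦ ?_⟩
  have hsum : ∑ g, repCount k A B g = ∑ _g : G, 1 := by
    rw [sum_repCount, hcard, sum_const, card_univ, smul_eq_mul, mul_one]
  exact (sum_eq_sum_iff_of_le fun g _ ↦ h g).1 hsum g (mem_univ g)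

theorem forall_repCount_eq_one_iff_one_le {k : ℕ} {A B : Finset G}
    (hcard : #A * #B = Fintype.card G) :
    (∀ g, repCount k A B g = 1) ↔ ∀ g, 1 ≤ repCount k A B g := by
  refine ⟨fun h g ↦ (h g).ge, fun h g ↦ ?_⟩
  have hsum : ∑ _g : G, 1 = ∑ g, repCount k A B g := by
    rw [sum_repCount, hcard, sum_const, card_univ, smul_eq_mul, mul_one]
  exact ((sum_eq_sum_iff_of_le fun g _ ↦ h g).1 hsum g (mem_univ g)).symm

theorem forall_repCount_prime_mul_eq_one (p : ℕ) [Fact p.Prime] {k : ℕ} {A B : Finset G}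
    (hpA : ¬ p ∣ #A) (hcard : #A * #B = Fintype.card G) (h : ∀ g, repCount k A B g = 1) :
    ∀ g, repCount (p * k) A B g = 1 := by
  have hk : dilatedSum p k A * dilatedSum p 1 B = dilatedSum p 1 univ := by
    ext g
    rw [coeff_dilatedSum_mul, coeff_dilatedSum_univ, h g, Nat.cast_one]
  have hfermat : (#A : ZMod p) ^ (p - 1) = 1 :=
    ZMod.pow_card_sub_one_eq_one ((ZMod.natCast_eq_zero_iff _ _).not.2 hpA)
  have hpk : dilatedSum p (p * k) A * dilatedSum p 1 B = dilatedSum p 1 univ := by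
    calc dilatedSum p (p * k) A * dilatedSum p 1 B
        = dilatedSum p k A ^ (p - 1) * (dilatedSum p k A * dilatedSum p 1 B) := by
          rw [← dilatedSum_pow_char, ← mul_assoc, ← pow_succ,
            Nat.sub_add_cancel (Fact.out : p.Prime).one_le]
      _ = ((#A : ZMod p) ^ (p - 1)) • dilatedSum p 1 univ := by
          rw [hk, dilatedSum_pow_mul_dilatedSum_univ, ← Nat.cast_smul_eq_nsmul (ZMod p),
            Nat.cast_pow]
      _ = dilatedSum p 1 univ := by rw [hfermat, one_smul]
  refine (forall_repCount_eq_one_iff_one_le hcard).2 fun g ↦ Nat.one_le_iff_ne_zero.2 fun h0 ↦ ?_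
  have := coeff_dilatedSum_mul p (p * k) A B g
  rw [hpk, coeff_dilatedSum_univ, h0, Nat.cast_zero] at this
  exact one_ne_zero this

theorem forall_repCount_eq_one_of_coprime {A B : Finset G}
    (hcard : #A * #B = Fintype.card G) (h : ∀ g, repCount 1 A B g = 1) {k : ℕ} (hk0 : 0 < k)
    (hk : k.Coprime #A) : ∀ g, repCount k A B g = 1 := by
  induction k using induction_on_primes with
  | zero => exact absurd hk0 (lt_irrefl 0)
  | one => exact h
  | prime_mul p a hp ih =>
    have : Fact p.Prime := ⟨hp⟩
    exact forall_repCount_prime_mul_eq_one p ((Nat.Prime.coprime_iff_not_dvd hp).1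
      (Nat.Coprime.coprime_mul_right hk)) hcard
      (ih (Nat.pos_of_mul_pos_left hk0) (Nat.Coprime.coprime_mul_left hk))

end Tiling

namespace ZMod

variable {M : ℕ}

theorem gcd_val_units_mul (u : (ZMod M)ˣ) (x : ZMod M) :
    (u * x).val.gcd M = x.val.gcd M := by
  rw [val_mul, ← Nat.gcd_rec, Nat.gcd_comm, (val_coe_unit_coprime u).gcd_mul_left_cancel]

theorem exists_units_mul_natCast_gcd_val (x : ZMod M) :
    ∃ u : (ZMod M)ˣ, x = u * (x.val.gcd M : ℕ) := by
  obtain ⟨d, hd, u, hu, rfl⟩ := x.eq_unit_mul_divisor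
  refine ⟨hu.unit, ?_⟩
  rw [IsUnit.unit_spec, ← IsUnit.unit_spec hu, gcd_val_units_mul, val_natCast, ← Nat.gcd_rec,
    Nat.gcd_eq_right hd]

theorem exists_units_mul_eq_of_gcd_val_eq {x y : ZMod M} (h : x.val.gcd M = y.val.gcd M) :
    ∃ u : (ZMod M)ˣ, y = u * x := by
  obtain ⟨v, hv⟩ := exists_units_mul_natCast_gcd_val x
  obtain ⟨w, hw⟩ := exists_units_mul_natCast_gcd_val y
  refine ⟨w * v⁻¹, ?_⟩
  rw [hw, hv, h, Units.val_mul, mul_assoc, Units.inv_mul_cancel_left]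

theorem gcd_val_eq_self_iff [NeZero M] {x : ZMod M} : x.val.gcd M = M ↔ x = 0 := by
  rw [Nat.gcd_eq_right_iff_dvd, ← natCast_eq_zero_iff, natCast_zmod_val]

end ZMod

namespace Tiling

variable {M : ℕ}

theorem self_mem_divSet {E : Finset (ZMod M)} (hE : E.Nonempty) : M ∈ DivSet E := by
  obtain ⟨a, ha⟩ := hE
  exact ⟨a, ha, a, ha, by rw [sub_self, ZMod.val_zero, Nat.gcd_zero_left]⟩

theorem divSet_inter_divSet_eq_singleton_of_tiles [NeZero M] {A B : Finset (ZMod M)}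
    (ht : Tiles A B) : DivSet A ∩ DivSet B = {M} := by
  have hrep := tiles_iff_forall_repCount_eq_one.1 ht
  have hcard := card_mul_card_eq_of_forall_repCount_eq_one hrep
  refine Set.Subset.antisymm ?_ fun d hd ↦ ?_
  · rintro d ⟨⟨a, ha, a', ha', rfl⟩, ⟨b, hb, b', hb', hd⟩⟩
    by_contra hne
    have haa' : a ≠ a' := fun h ↦ hne (ZMod.gcd_val_eq_self_iff.2 (sub_eq_zero.2 h))
    have : Nontrivial (ZMod M) := nontrivial_of_ne a a' haa'
    obtain ⟨u, hu⟩ := ZMod.exists_units_mul_eq_of_gcd_val_eq hd.symm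
    set k := (u : ZMod M).val
    have hk0 : 0 < k := ZMod.val_pos.2 u.ne_zero
    have hkA : k.Coprime #A := (ZMod.val_coe_unit_coprime u).coprime_dvd_right
      (Dvd.intro _ (hcard.trans (ZMod.card M)))
    have hinj := repCount_le_one_iff_injOn.1 fun g ↦
      (forall_repCount_eq_one_of_coprime hcard hrep hk0 hkA g).le
    have hsame : k • a + b' = k • a' + b := by
      rw [nsmul_eq_mul, nsmul_eq_mul, ZMod.natCast_zmod_val]
      linear_combination -hu
    exact haa' (congrArg Prod.fst (hinj (x₁ := (a, b')) (x₂ := (a', b))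
      ⟨ha, hb'⟩ ⟨ha', hb⟩ hsame))
  · rw [Set.mem_singleton_iff.1 hd]
    have hpos : 0 < #A * #B := hcard ▸ Fintype.card_pos
    exact ⟨self_mem_divSet (card_pos.1 (Nat.pos_of_mul_pos_right hpos)),
      self_mem_divSet (card_pos.1 (Nat.pos_of_mul_pos_left hpos))⟩

theorem tiles_of_card_of_divSet_inter [NeZero M] {A B : Finset (ZMod M)} (hcard : #A * #B = M)
    (hdiv : DivSet A ∩ DivSet B = {M}) : Tiles A B := by
  refine tiles_iff_forall_repCount_eq_one.2 <|
    (forall_repCount_eq_one_iff_le_one (hcard.trans (ZMod.card M).symm)).2 <|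
      repCount_le_one_iff_injOn.2 ?_
  rintro ⟨a, b⟩ hab ⟨a', b'⟩ hab' hsum
  simp only [Set.mem_prod, mem_coe, one_nsmul] at hab hab' hsum
  have hdiff : a - a' = b' - b := by linear_combination hsum
  have hgcd : (a - a').val.gcd M ∈ DivSet A ∩ DivSet B :=
    ⟨⟨a, hab.1, a', hab'.1, rfl⟩, ⟨b', hab'.2, b, hab.2, by rw [hdiff]⟩⟩
  rw [hdiv, Set.mem_singleton_iff, ZMod.gcd_val_eq_self_iff, sub_eq_zero] at hgcd
  subst hgcd
  rw [add_left_cancel hsum]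

end Tiling

open Tiling in
/-- Sands' theorem: `A ⊕ B = ℤ_M` iff `|A|·|B| = M` and `Div(A) ∩ Div(B) = {M}`. -/
theorem stmt_0 (M : ℕ) (hM : 0 < M) (A B : Finset (ZMod M)) :
    Tiles A B ↔ (A.card * B.card = M ∧ DivSet A ∩ DivSet B = {M}) := by
  have : NeZero M := ⟨hM.ne'⟩
  refine ⟨fun ht ↦ ⟨?_, divSet_inter_divSet_eq_singleton_of_tiles ht⟩,
    fun ⟨hcard, hdiv⟩ ↦ tiles_of_card_of_divSet_inter hcard hdiv⟩
  rw [card_mul_card_eq_of_forall_repCount_eq_one (tiles_iff_forall_repCount_eq_one.1 ht),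
    ZMod.card]
end

section
/- Let M = (pqr)^2 with p, q, r distinct primes, A ⊕ B = ℤ_M, |A| = |B| = pqr, and ℓ ∈ {p, q, r}. If Φ_ℓ(x) divides A(x) (equivalently Φ_{ℓ²}(x) divides B(x)), then for all j, k ∈ {0, 1, ..., ℓ-1}, the number of elements of B congruent to j + kℓ mod ℓ² equals (1/ℓ) times the number of elements of B congruent to j mod ℓ. -/
open Finset Polynomial

/-- The mask polynomial `E(x) = Σ_{a ∈ E} x^a`, representatives in `{0, …, M-1}`. -/
noncomputable def maskPoly {M : ℕ} (E : Finset (ZMod M)) : Polynomial ℤ :=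
  ∑ a ∈ E, X ^ a.val

private lemma aux_pow_mod_dvd (n v : ℕ) : (X ^ n - 1 : Polynomial ℤ) ∣ X ^ v - X ^ (v % n) := by
  have h : (X ^ n - 1 : Polynomial ℤ) ∣ (X ^ n) ^ (v / n) - 1 := by
    simpa using sub_dvd_pow_sub_pow (X ^ n : Polynomial ℤ) 1 (v / n)
  obtain ⟨c, hc⟩ := h
  refine ⟨c * X ^ (v % n), ?_⟩
  have hXv : (X : Polynomial ℤ) ^ v = (X ^ n) ^ (v / n) * X ^ (v % n) := by
    rw [← pow_mul, ← pow_add, Nat.div_add_mod]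
  rw [hXv, show (X ^ n) ^ (v / n) * (X : Polynomial ℤ) ^ (v % n) - X ^ (v % n)
      = ((X ^ n) ^ (v / n) - 1) * X ^ (v % n) by ring, hc]
  ring

private lemma aux_pow_sub_one_dvd {m n : ℕ} (h : m ∣ n) :
    (X ^ m - 1 : Polynomial ℤ) ∣ X ^ n - 1 := by
  obtain ⟨c, rfl⟩ := h
  rw [pow_mul]
  simpa using sub_dvd_pow_sub_pow (X ^ m : Polynomial ℤ) 1 c

/-- If `Φ_ℓ(x) ∣ A(x)` then for all `j, k < ℓ`,
`ℓ · |{x ∈ B : x ≡ j + kℓ (mod ℓ²)}| = |{x ∈ B : x ≡ j (mod ℓ)}|`. -/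
theorem stmt_5 (p q r M : ℕ) (hp : p.Prime) (hq : q.Prime) (hr : r.Prime)
    (hpq : p ≠ q) (hqr : q ≠ r) (hpr : p ≠ r) (hM : M = (p * q * r) ^ 2)
    (A B : Finset (ZMod M)) (hT : Tiles A B)
    (hA : A.card = p * q * r) (hB : B.card = p * q * r)
    (ℓ : ℕ) (hℓ : ℓ = p ∨ ℓ = q ∨ ℓ = r)
    (hdvd : cyclotomic ℓ ℤ ∣ maskPoly A) :
    ∀ j < ℓ, ∀ k < ℓ,
      ℓ * (B.filter fun x => x.val % ℓ ^ 2 = j + k * ℓ).card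
        = (B.filter fun x => x.val % ℓ = j).card := by
  intro j hj k hk
  have hl : ℓ.Prime := by rcases hℓ with rfl | rfl | rfl <;> assumption
  haveI : Fact ℓ.Prime := ⟨hl⟩
  have hl0 : 0 < ℓ := hl.pos
  have hl2pos : 0 < ℓ ^ 2 := pow_pos hl0 2
  have hMpos : 0 < M := by
    subst hM
    exact pow_pos (Nat.mul_pos (Nat.mul_pos hp.pos hq.pos) hr.pos) 2
  haveI : NeZero M := ⟨hMpos.ne'⟩
  have hldvdM : ℓ ^ 2 ∣ M := by
    subst hM
    apply pow_dvd_pow_of_dvd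
    rcases hℓ with rfl | rfl | rfl
    · exact Dvd.dvd.mul_right (dvd_mul_right ℓ q) r
    · exact Dvd.dvd.mul_right (dvd_mul_left ℓ p) r
    · exact dvd_mul_left ℓ (p * q)
  set Φ : Polynomial ℤ := cyclotomic (ℓ ^ 2) ℤ with hΦdef
  have hΦgeom : Φ = ∑ i ∈ range ℓ, (X : Polynomial ℤ) ^ (ℓ * i) := by
    rw [hΦdef, show (2 : ℕ) = 1 + 1 from rfl, cyclotomic_prime_pow_eq_geom_sum hl]
    simp [← pow_mul]
  have hΦprime : Prime Φ :=
    UniqueFactorizationMonoid.irreducible_iff_prime.mp (cyclotomic.irreducible hl2pos)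
  have hΦne : Φ ≠ 0 := cyclotomic_ne_zero _ ℤ
  -- Step 1: Φ ∣ A(x)·B(x)
  have hXM : Φ ∣ (X ^ M - 1 : Polynomial ℤ) :=
    (cyclotomic.dvd_X_pow_sub_one (ℓ ^ 2) ℤ).trans (aux_pow_sub_one_dvd hldvdM)
  have e1 : maskPoly A * maskPoly B = ∑ ab ∈ A ×ˢ B, (X : Polynomial ℤ) ^ (ab.1.val + ab.2.val) := by
    rw [maskPoly, maskPoly, sum_mul_sum, Finset.sum_product]
    simp [pow_add]
  have ebij : ∑ ab ∈ A ×ˢ B, (X : Polynomial ℤ) ^ ((ab.1 + ab.2).val)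
      = ∑ g : ZMod M, (X : Polynomial ℤ) ^ g.val := by
    apply Finset.sum_nbij (i := fun ab => ab.1 + ab.2)
    · intro a _; exact mem_univ _
    · intro a ha b hb hab
      simp only [Finset.coe_product, Set.mem_prod, mem_coe] at ha hb
      exact (hT (a.1 + a.2)).unique ⟨ha.1, ha.2, rfl⟩ ⟨hb.1, hb.2, hab.symm⟩
    · intro g _
      obtain ⟨ab, ⟨h1, h2, h3⟩, _⟩ := hT g
      exact ⟨ab, by simp [h1, h2], h3⟩
    · intro a _; rfl
  have euniv : ∑ g : ZMod M, (X : Polynomial ℤ) ^ g.val = ∑ i ∈ range M, (X : Polynomial ℤ) ^ i := by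
    refine Finset.sum_nbij' (fun g => g.val) (fun i => (i : ZMod M)) ?_ ?_ ?_ ?_ ?_
    · intro g _; exact mem_range.mpr (ZMod.val_lt g)
    · intro i _; exact mem_univ _
    · intro g _; exact ZMod.natCast_rightInverse g
    · intro i hi; exact ZMod.val_cast_of_lt (mem_range.mp hi)
    · intro g _; rfl
  have hprod : (X ^ M - 1 : Polynomial ℤ) ∣
      maskPoly A * maskPoly B - ∑ i ∈ range M, (X : Polynomial ℤ) ^ i := by
    rw [e1, ← euniv, ← ebij, ← Finset.sum_sub_distrib]
    apply dvd_sum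
    intro ab _
    have hv : (ab.1 + ab.2).val = (ab.1.val + ab.2.val) % M := ZMod.val_add ab.1 ab.2
    rw [hv]
    exact aux_pow_mod_dvd M (ab.1.val + ab.2.val)
  have hgeom : Φ ∣ ∑ i ∈ range M, (X : Polynomial ℤ) ^ i := by
    have h := hXM
    rw [← geom_sum_mul] at h
    rcases hΦprime.dvd_or_dvd h with h' | h'
    · exact h'
    · exfalso
      have hX1 : (X - 1 : Polynomial ℤ) ≠ 0 := X_sub_C_ne_zero 1
      have hd := Polynomial.natDegree_le_of_dvd h' hX1
      rw [hΦdef, natDegree_cyclotomic] at hd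
      have hdX : (X - 1 : Polynomial ℤ).natDegree = 1 := by
        simpa using natDegree_X_sub_C (1 : ℤ)
      rw [hdX, Nat.totient_prime_pow hl (by norm_num)] at hd
      norm_num at hd
      have h2 := hl.two_le
      have h3 : 1 ≤ ℓ - 1 := by omega
      have h4 := Nat.mul_le_mul h2 h3
      omega
  have h1 : Φ ∣ maskPoly A * maskPoly B := by
    have he : maskPoly A * maskPoly B
        = (maskPoly A * maskPoly B - ∑ i ∈ range M, (X : Polynomial ℤ) ^ i)
          + ∑ i ∈ range M, (X : Polynomial ℤ) ^ i := by ring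
    rw [he]
    exact dvd_add (hXM.trans hprod) hgeom
  -- Step 2: Φ ∣ B(x)
  have h2 : Φ ∣ maskPoly B := by
    rcases hΦprime.dvd_or_dvd h1 with hA2 | h2
    · exfalso
      obtain ⟨t, ht⟩ := hA2
      have hΦℓprime : Prime (cyclotomic ℓ ℤ) :=
        UniqueFactorizationMonoid.irreducible_iff_prime.mp (cyclotomic.irreducible hl0)
      have hne : ¬ (cyclotomic ℓ ℤ ∣ Φ) := by
        intro hdd
        have hassoc := (cyclotomic.irreducible hl0).associated_of_dvd
          (cyclotomic.irreducible hl2pos) hdd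
        have hle1 := Polynomial.natDegree_le_of_dvd hassoc.dvd (cyclotomic_ne_zero (ℓ ^ 2) ℤ)
        have hle2 := Polynomial.natDegree_le_of_dvd hassoc.symm.dvd (cyclotomic_ne_zero ℓ ℤ)
        have this : (cyclotomic ℓ ℤ).natDegree = (cyclotomic (ℓ ^ 2) ℤ).natDegree :=
          Nat.le_antisymm hle1 hle2
        rw [natDegree_cyclotomic, natDegree_cyclotomic, Nat.totient_prime hl,
          Nat.totient_prime_pow hl (by norm_num)] at this
        norm_num at this
        have h2 := hl.two_le
        have h3 : 1 ≤ ℓ - 1 := by omega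
        have h4 := Nat.mul_le_mul h2 (le_refl (ℓ - 1))
        omega
      have hdt : cyclotomic ℓ ℤ ∣ t := by
        rcases hΦℓprime.dvd_or_dvd (ht ▸ hdvd) with h | h
        · exact absurd h hne
        · exact h
      obtain ⟨s, hs⟩ := hdt
      have heval : (A.card : ℤ) = (ℓ : ℤ) * ((ℓ : ℤ) * s.eval 1) := by
        have := congrArg (Polynomial.eval 1) ht
        rw [hs] at this
        simp only [eval_mul] at this
        rw [hΦdef, show (2 : ℕ) = 1 + 1 from rfl, eval_one_cyclotomic_prime_pow,
          eval_one_cyclotomic_prime] at this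
        have hml : (maskPoly A).eval 1 = (A.card : ℤ) := by
          simp [maskPoly, eval_finset_sum]
        rw [hml] at this
        linarith [this]
      have hdvdnat : ℓ * ℓ ∣ p * q * r := by
        have : ((ℓ * ℓ : ℕ) : ℤ) ∣ ((p * q * r : ℕ) : ℤ) := by
          rw [← hA]
          exact ⟨s.eval 1, by push_cast; rw [heval]; ring⟩
        exact_mod_cast this
      rcases hℓ with rfl | rfl | rfl
      · have : ℓ ∣ q * r := by
          have h' : ℓ * ℓ ∣ ℓ * (q * r) := by rwa [← mul_assoc]
          exact (Nat.mul_dvd_mul_iff_left hl0).mp h'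
        rcases (Nat.Prime.dvd_mul hl).mp this with h | h
        · exact hpq ((Nat.prime_dvd_prime_iff_eq hl hq).mp h)
        · exact hpr ((Nat.prime_dvd_prime_iff_eq hl hr).mp h)
      · have : ℓ ∣ p * r := by
          have h' : ℓ * ℓ ∣ ℓ * (p * r) := by
            rw [show ℓ * (p * r) = p * ℓ * r by ring]; exact hdvdnat
          exact (Nat.mul_dvd_mul_iff_left hl0).mp h'
        rcases (Nat.Prime.dvd_mul hl).mp this with h | h
        · exact hpq ((Nat.prime_dvd_prime_iff_eq hl hp).mp h).symm
        · exact hqr ((Nat.prime_dvd_prime_iff_eq hl hr).mp h)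
      · have : ℓ ∣ p * q := by
          have h' : ℓ * ℓ ∣ ℓ * (p * q) := by
            rw [show ℓ * (p * q) = p * q * ℓ by ring]; exact hdvdnat
          exact (Nat.mul_dvd_mul_iff_left hl0).mp h'
        rcases (Nat.Prime.dvd_mul hl).mp this with h | h
        · exact hpr ((Nat.prime_dvd_prime_iff_eq hl hp).mp h).symm
        · exact hqr ((Nat.prime_dvd_prime_iff_eq hl hq).mp h).symm
    · exact h2
  -- Step 3: extract coefficient equalities
  set P : Polynomial ℤ := ∑ b ∈ B, (X : Polynomial ℤ) ^ (b.val % ℓ ^ 2) with hPdef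
  have hdiff : (X ^ (ℓ ^ 2) - 1 : Polynomial ℤ) ∣ maskPoly B - P := by
    rw [maskPoly, hPdef, ← Finset.sum_sub_distrib]
    apply dvd_sum
    intro b _
    exact aux_pow_mod_dvd (ℓ ^ 2) b.val
  have hP : Φ ∣ P := by
    have h7 : Φ ∣ maskPoly B - P := (cyclotomic.dvd_X_pow_sub_one (ℓ ^ 2) ℤ).trans hdiff
    have h8 := dvd_sub h2 h7
    rwa [sub_sub_cancel] at h8
  obtain ⟨R, hR⟩ := hP
  have hRsmall : ∀ m, ℓ ≤ m → R.coeff m = 0 := by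
    intro m hm
    by_cases hR0 : R = 0
    · simp [hR0]
    apply coeff_eq_zero_of_natDegree_lt
    have hPdeg : P.natDegree ≤ ℓ ^ 2 - 1 := by
      apply natDegree_sum_le_of_forall_le
      intro b _
      rw [natDegree_X_pow]
      have := Nat.mod_lt b.val hl2pos
      omega
    have hmul := natDegree_mul hΦne hR0
    rw [← hR] at hmul
    rw [hΦdef, natDegree_cyclotomic, Nat.totient_prime_pow hl (by norm_num)] at hmul
    norm_num at hmul
    have hsq : ℓ * (ℓ - 1) + ℓ = ℓ ^ 2 := by
      have h0 : ℓ - 1 + 1 = ℓ := Nat.succ_pred_eq_of_pos hl0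
      calc ℓ * (ℓ - 1) + ℓ = ℓ * ((ℓ - 1) + 1) := (Nat.mul_succ ℓ (ℓ - 1)).symm
        _ = ℓ * ℓ := by rw [h0]
        _ = ℓ ^ 2 := (sq ℓ).symm
    have hlt : ℓ * (ℓ - 1) + R.natDegree < ℓ * (ℓ - 1) + ℓ := by
      rw [hsq, ← hmul]
      exact lt_of_le_of_lt hPdeg (Nat.sub_lt hl2pos one_pos)
    exact lt_of_lt_of_le (Nat.lt_of_add_lt_add_left hlt) hm
  have hcoeff : ∀ k' < ℓ, P.coeff (j + k' * ℓ) = R.coeff j := by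
    intro k' hk'
    rw [hR, hΦgeom, Finset.sum_mul, finset_sum_coeff]
    rw [Finset.sum_eq_single k']
    · rw [X_pow_mul, coeff_mul_X_pow']
      have hcomm : ℓ * k' = k' * ℓ := Nat.mul_comm _ _
      rw [if_pos (by omega : ℓ * k' ≤ j + k' * ℓ)]
      congr 1
      omega
    · intro i hi hne
      rw [X_pow_mul, coeff_mul_X_pow']
      have h' : ℓ * k' = k' * ℓ := Nat.mul_comm _ _
      rcases Nat.lt_or_ge i k' with hik | hik
      · rw [if_pos (by
          have := Nat.mul_le_mul_left ℓ (Nat.le_of_lt hik)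
          omega : ℓ * i ≤ j + k' * ℓ)]
        apply hRsmall
        have := Nat.mul_le_mul_left ℓ (by omega : i + 1 ≤ k')
        rw [Nat.mul_add, Nat.mul_one] at this
        omega
      · have hik' : k' + 1 ≤ i := by omega
        rw [if_neg (by
          have := Nat.mul_le_mul_left ℓ hik'
          rw [Nat.mul_add, Nat.mul_one] at this
          omega)]
    · intro h
      exact absurd (mem_range.mpr hk') h
  have hPc : ∀ n, P.coeff n = ((B.filter fun x => x.val % ℓ ^ 2 = n).card : ℤ) := by
    intro n
    rw [hPdef, finset_sum_coeff]
    simp only [coeff_X_pow]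
    rw [Finset.sum_boole]
    norm_cast
    congr 1
    apply Finset.filter_congr
    intro x _
    exact ⟨Eq.symm, Eq.symm⟩
  have hcount : (B.filter fun x => x.val % ℓ = j).card
      = ∑ k' ∈ range ℓ, (B.filter fun x => x.val % ℓ ^ 2 = j + k' * ℓ).card := by
    rw [Finset.card_eq_sum_card_fiberwise
      (f := fun x : ZMod M => x.val % ℓ ^ 2 / ℓ) (t := range ℓ)
      (fun x _ => by
        have hlt : x.val % ℓ ^ 2 < ℓ * ℓ := by
          rw [← sq]; exact Nat.mod_lt x.val hl2pos
        exact mem_range.mpr ((Nat.div_lt_iff_lt_mul hl0).mpr hlt))]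
    apply sum_congr rfl
    intro k' _
    congr 1
    rw [Finset.filter_filter]
    apply Finset.filter_congr
    intro x _
    have hd : ℓ ∣ ℓ ^ 2 := dvd_pow_self ℓ two_ne_zero
    have hmm : x.val % ℓ ^ 2 % ℓ = x.val % ℓ := Nat.mod_mod_of_dvd _ hd
    constructor
    · rintro ⟨ha, hb⟩
      subst ha; subst hb
      rw [← hmm]
      exact (Nat.mod_add_div' (x.val % ℓ ^ 2) ℓ).symm
    · intro hm
      refine ⟨?_, ?_⟩
      · rw [← hmm, hm, Nat.add_mul_mod_self_right, Nat.mod_eq_of_lt hj]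
      · rw [hm, Nat.add_mul_div_right _ _ hl0, Nat.div_eq_of_lt hj, Nat.zero_add]
  conv_rhs => rw [hcount]
  have hall : ∀ k' ∈ range ℓ,
      (B.filter fun x => x.val % ℓ ^ 2 = j + k' * ℓ).card
        = (B.filter fun x => x.val % ℓ ^ 2 = j + k * ℓ).card := by
    intro k' hk'
    have e1' := hcoeff k' (mem_range.mp hk')
    have e2' := hcoeff k hk
    rw [hPc] at e1' e2'
    exact_mod_cast e1'.trans e2'.symm
  rw [Finset.sum_congr rfl hall, Finset.sum_const, card_range, smul_eq_mul]
end

section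
/- Let M = p²q²r² with p, q, r distinct primes, and let E ⊆ ℤ_M satisfy: all elements of E are congruent to each other modulo p²qr. If |E| > max{q, r}, then {p²qr, p²q²r, p²qr²} ⊆ Div(E), i.e., there exist pairs of elements of E whose difference has gcd with M equal to p²qr, to p²q²r, and to p²qr², respectively. -/
/-!
With `P = p²qr` and `M = P·qr`, all of `E` lies in one coset `a₀ + P·ℤ_M`, so every difference
is `a - b = P·k` for an integer `k`, and `gcd(a - b, M) = P · gcd(k, q) · gcd(k, r)`. Colour each
point of `E` by its coset coordinate mod `q` and mod `r`: the two colourings jointly separate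
points, and `|E|` exceeds both numbers of colours. Pigeonhole gives a pair agreeing mod `q`
(gcd `P·q`) and one agreeing mod `r` (gcd `P·r`). If no pair disagreed in both colours, a pair
agreeing mod `q` would force the `q`-colour to be constant, making the `r`-colour injective on
`E`, which is impossible; the disagreeing pair has gcd `P`.
-/

open Finset

theorem Finset.exists_ne_map_eq_of_card_lt {ι α : Type*} [Fintype α] {s : Finset ι} (f : ι → α)
    (hs : Fintype.card α < #s) : ∃ x ∈ s, ∃ y ∈ s, x ≠ y ∧ f x = f y :=
  exists_ne_map_eq_of_card_lt_of_maps_to (t := univ) (by rwa [card_univ])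
    fun _ _ ↦ mem_coe.2 (mem_univ _)

theorem Finset.exists_map_ne_and_map_ne {ι α β : Type*} [Fintype α] [Fintype β] {s : Finset ι}
    {f : ι → α} {g : ι → β} (hfg : Set.InjOn (fun i ↦ (f i, g i)) s)
    (hα : Fintype.card α < #s) (hβ : Fintype.card β < #s) :
    ∃ x ∈ s, ∃ y ∈ s, f x ≠ f y ∧ g x ≠ g y := by
  by_contra! hall
  obtain ⟨x₁, hx₁, x₂, hx₂, hne, hf₁₂⟩ := exists_ne_map_eq_of_card_lt f hα
  have hg₁₂ : g x₁ ≠ g x₂ := fun hg ↦ hne (hfg hx₁ hx₂ (Prod.ext hf₁₂ hg))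
  -- a point off the `f`-fibre of `x₁` would share its `g`-colour with both `x₁` and `x₂`
  have hf_const : ∀ x ∈ s, f x = f x₁ := by
    intro x hx
    by_contra hfx
    exact hg₁₂ ((hall x hx x₁ hx₁ hfx).symm.trans (hall x hx x₂ hx₂ (hf₁₂ ▸ hfx)))
  have hg_inj : Set.InjOn g s := fun x hx y hy hxy ↦
    hfg hx hy (Prod.ext ((hf_const x hx).trans (hf_const y hy).symm) hxy)
  have := card_le_card_of_injOn g (fun _ _ ↦ mem_coe.2 (mem_univ _)) hg_inj
  rw [card_univ] at this
  omega

theorem Int.gcd_natCast_prime_eq_ite {q : ℕ} (hq : q.Prime) (k : ℤ) :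
    Int.gcd k q = if (q : ℤ) ∣ k then q else 1 := by
  rw [Int.gcd_eq_natAbs, Int.natAbs_natCast]
  split_ifs with h
  · exact Nat.gcd_eq_right (Int.natCast_dvd.1 h)
  · exact Nat.Coprime.symm ((hq.coprime_iff_not_dvd).2 (mt Int.natCast_dvd.2 h))

theorem Int.gcd_natCast_mul_primes_eq {q r : ℕ} (hq : q.Prime) (hr : r.Prime) (hqr : q ≠ r)
    (k : ℤ) :
    Int.gcd k (q * r : ℕ) = (if (q : ℤ) ∣ k then q else 1) * (if (r : ℤ) ∣ k then r else 1) := by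
  rw [← Int.gcd_natCast_prime_eq_ite hq, ← Int.gcd_natCast_prime_eq_ite hr]
  simp only [Int.gcd_eq_natAbs, Int.natAbs_natCast]
  exact Nat.Coprime.gcd_mul _ ((Nat.coprime_primes hq hr).2 hqr)

theorem ZMod.gcd_val_intCast {M : ℕ} [NeZero M] (n : ℤ) :
    Nat.gcd (n : ZMod M).val M = Int.gcd n M := by
  rw [← Int.gcd_natCast_natCast, ZMod.val_intCast, Int.gcd_emod]

theorem ZMod.exists_intCast_mul_sub_eq_sub {M P : ℕ} [NeZero M] {E : Finset (ZMod M)}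
    (hE : ∀ a ∈ E, ∀ b ∈ E, P ∣ (a - b).val) :
    ∃ u : ZMod M → ℤ, ∀ a ∈ E, ∀ b ∈ E, ((P * (u a - u b) : ℤ) : ZMod M) = a - b := by
  rcases E.eq_empty_or_nonempty with rfl | ⟨a₀, ha₀⟩
  · exact ⟨0, by simp⟩
  refine ⟨fun a ↦ ((a - a₀).val / P : ℕ), fun a ha b hb ↦ ?_⟩
  have hcoset : ∀ a ∈ E, (P : ZMod M) * ((a - a₀).val / P : ℕ) = a - a₀ := fun a ha ↦ by
    rw [← Nat.cast_mul, Nat.mul_div_cancel' (hE a ha a₀ ha₀), ZMod.natCast_zmod_val]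
  simp only [Int.cast_mul, Int.cast_sub, Int.cast_natCast, mul_sub, hcoset a ha, hcoset b hb]
  ring

theorem subset_divSet_of_dvd_sub {P q r M : ℕ} [NeZero M] (hq : q.Prime) (hr : r.Prime)
    (hqr : q ≠ r) (hM : M = P * (q * r)) {E : Finset (ZMod M)}
    (hE : ∀ a ∈ E, ∀ b ∈ E, P ∣ (a - b).val) (hcard : max q r < #E) :
    ({P, P * q, P * r} : Set ℕ) ⊆ DivSet E := by
  have : NeZero q := ⟨hq.ne_zero⟩
  have : NeZero r := ⟨hr.ne_zero⟩
  obtain ⟨u, hu⟩ := ZMod.exists_intCast_mul_sub_eq_sub hE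
  set f : ZMod M → ZMod q := fun a ↦ u a
  set g : ZMod M → ZMod r := fun a ↦ u a
  have hdvd_iff {s : ℕ} (a b : ZMod M) : (s : ℤ) ∣ u a - u b ↔ (u a : ZMod s) = u b := by
    rw [ZMod.intCast_eq_intCast_iff_dvd_sub, dvd_sub_comm]
  have hgcd : ∀ a ∈ E, ∀ b ∈ E, Nat.gcd (a - b).val M =
      P * (if f a = f b then q else 1) * (if g a = g b then r else 1) := by
    intro a ha b hb
    rw [← hu a ha b hb, ZMod.gcd_val_intCast, hM, Nat.cast_mul, Int.gcd_mul_left,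
      Int.natAbs_natCast, Int.gcd_natCast_mul_primes_eq hq hr hqr, mul_assoc]
    simp only [hdvd_iff, f, g]
  have hfg : Set.InjOn (fun a ↦ (f a, g a)) E := by
    intro a ha b hb hab
    obtain ⟨hf, hg⟩ := Prod.ext_iff.1 hab
    have hM_dvd : M ∣ (a - b).val := by
      rw [← Nat.gcd_eq_right_iff_dvd, hgcd a ha b hb, if_pos hf, if_pos hg, hM, mul_assoc]
    rw [← sub_eq_zero, ← ZMod.val_eq_zero]
    exact Nat.eq_zero_of_dvd_of_lt hM_dvd (ZMod.val_lt _)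
  have hq_lt : Fintype.card (ZMod q) < #E := by rw [ZMod.card]; omega
  have hr_lt : Fintype.card (ZMod r) < #E := by rw [ZMod.card]; omega
  rintro d (rfl | rfl | rfl)
  · obtain ⟨a, ha, b, hb, hf, hg⟩ := exists_map_ne_and_map_ne hfg hq_lt hr_lt
    exact ⟨a, ha, b, hb, by rw [hgcd a ha b hb, if_neg hf, if_neg hg, mul_one, mul_one]⟩
  · obtain ⟨a, ha, b, hb, hne, hf⟩ := exists_ne_map_eq_of_card_lt f hq_lt
    have hg : g a ≠ g b := fun hg ↦ hne (hfg ha hb (Prod.ext hf hg))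
    exact ⟨a, ha, b, hb, by rw [hgcd a ha b hb, if_pos hf, if_neg hg, mul_one]⟩
  · obtain ⟨a, ha, b, hb, hne, hg⟩ := exists_ne_map_eq_of_card_lt g hr_lt
    have hf : f a ≠ f b := fun hf ↦ hne (hfg ha hb (Prod.ext hf hg))
    exact ⟨a, ha, b, hb, by rw [hgcd a ha b hb, if_neg hf, if_pos hg, mul_one]⟩

theorem stmt_6_general (p q r M : ℕ) (hp : p.Prime) (hq : q.Prime) (hr : r.Prime)
    (hqr : q ≠ r) (hM : M = p ^ 2 * q ^ 2 * r ^ 2)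
    (E : Finset (ZMod M))
    (hcong : ∀ a ∈ E, ∀ b ∈ E, (p ^ 2 * q * r) ∣ (a - b).val)
    (hcard : max q r < E.card) :
    ({p ^ 2 * q * r, p ^ 2 * q ^ 2 * r, p ^ 2 * q * r ^ 2} : Set ℕ) ⊆ DivSet E := by
  have : NeZero M := ⟨by simp [hM, hp.ne_zero, hq.ne_zero, hr.ne_zero]⟩
  have h := subset_divSet_of_dvd_sub hq hr hqr (by rw [hM]; ring) hcong hcard
  rwa [show p ^ 2 * q * r * q = p ^ 2 * q ^ 2 * r by ring,
    show p ^ 2 * q * r * r = p ^ 2 * q * r ^ 2 by ring] at h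

/-- If all elements of `E ⊆ ℤ_M` are congruent to each other mod `p²qr` and
`|E| > max{q, r}`, then `{p²qr, p²q²r, p²qr²} ⊆ Div(E)`. -/
theorem stmt_6 (p q r M : ℕ) (hp : p.Prime) (hq : q.Prime) (hr : r.Prime)
    (hpq : p ≠ q) (hqr : q ≠ r) (hpr : p ≠ r) (hM : M = p ^ 2 * q ^ 2 * r ^ 2)
    (E : Finset (ZMod M))
    (hcong : ∀ a ∈ E, ∀ b ∈ E, (p ^ 2 * q * r) ∣ (a - b).val)
    (hcard : max q r < E.card) :
    ({p ^ 2 * q * r, p ^ 2 * q ^ 2 * r, p ^ 2 * q * r ^ 2} : Set ℕ) ⊆ DivSet E :=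
  stmt_6_general p q r M hp hq hr hqr hM E hcong hcard
end

section
/- Let p, q, r be distinct primes, M = (pqr)², and let U = {u_0, ..., u_{p-1}}, V = {v_0, ..., v_{q-1}}, W = {w_0, ..., w_{r-1}} be sets of integers with u_i ≡ i (mod p), v_j ≡ j (mod q), w_k ≡ k (mod r). Define A = q²r²U + r²p²V + p²q²W ⊆ ℤ_M (the set of all sums q²r²u + r²p²v + p²q²w). Then |A| = pqr and Div(A) ⊆ {1, p², q², r², p²q², q²r², r²p², M}. -/
open Finset

/-!
Modulo `p²` the element `q²r²u + r²p²v + p²q²w` is congruent to `q²r²u`, and `q²r²` is prime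
to `p`. Distinct elements of the transversal `U` are incongruent mod `p`, so the difference of
two elements of `A` is divisible by `p²` when their `u`-coordinates agree and prime to `p`
otherwise. Hence `gcd(a - a', M)` is the product of the `p²`, `q²`, `r²` over the coordinates
that agree, which gives the divisor set; and `a = a'` forces all coordinates to agree, which
makes the parametrisation of `A` injective.
-/

lemma injOn_emod_of_card_eq {n : ℕ} {U : Finset ℤ} (hcard : U.card = n)
    (hU : ∀ i : ℕ, i < n → ∃ u ∈ U, u % (n : ℤ) = i) :
    Set.InjOn (· % (n : ℤ)) U := by
  rcases n.eq_zero_or_pos with rfl | hn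
  · simp [card_eq_zero.mp hcard]
  refine injOn_of_surjOn_of_card_le _ (t := Ico 0 (n : ℤ)) ?_ ?_ (by simp [hcard])
  · intro u _
    simp only [coe_Ico, Set.mem_Ico]
    exact ⟨Int.emod_nonneg u (by omega), Int.emod_lt_of_pos u (by omega)⟩
  · intro i hi
    simp only [coe_Ico, Set.mem_Ico] at hi
    lift i to ℕ using hi.1
    obtain ⟨u, hu, hui⟩ := hU i (by omega)
    exact ⟨u, hu, hui⟩

lemma Nat.gcd_prime_sq_eq_ite {p c n : ℕ} {a : ℤ} (hp : p.Prime) (hc : c.Coprime p)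
    (ha : (p : ℤ) ∣ a → a = 0) (h : (n : ℤ) ≡ c * a [ZMOD p ^ 2]) :
    n.gcd (p ^ 2) = if a = 0 then p ^ 2 else 1 := by
  split_ifs with h0
  · rw [h0, mul_zero] at h
    exact Nat.gcd_eq_right (by exact_mod_cast Int.modEq_zero_iff_dvd.mp h)
  · have hpn : ¬ p ∣ n := by
      intro hpn
      have hpca : (p : ℤ) ∣ c * a - n :=
        (dvd_pow_self _ two_ne_zero).trans (Int.modEq_iff_dvd.mp h)
      have hpca : (p : ℤ) ∣ c * a := by
        simpa using dvd_add hpca (Int.natCast_dvd_natCast.mpr hpn)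
      exact h0 (ha ((Nat.isCoprime_iff_coprime.mpr hc).symm.dvd_of_dvd_mul_left hpca))
    exact Nat.Coprime.pow_right 2 (hp.coprime_iff_not_dvd.mpr hpn).symm

lemma Nat.Coprime.gcd_mul_mul (n : ℕ) {a b c : ℕ} (hab : a.Coprime b) (hac : a.Coprime c)
    (hbc : b.Coprime c) : n.gcd (a * b * c) = n.gcd a * n.gcd b * n.gcd c := by
  rw [Nat.Coprime.gcd_mul n (.mul_left hac hbc), Nat.Coprime.gcd_mul n hab]

def tripleSum (p q r : ℕ) (u v w : ℤ) : ℤ :=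
  (q : ℤ) ^ 2 * r ^ 2 * u + (r : ℤ) ^ 2 * p ^ 2 * v + (p : ℤ) ^ 2 * q ^ 2 * w

lemma tripleSum_rotate (p q r : ℕ) (u v w : ℤ) :
    tripleSum p q r u v w = tripleSum q r p v w u := by
  unfold tripleSum; ring

lemma tripleSum_sub_modEq (p q r : ℕ) (u v w u' v' w' : ℤ) :
    tripleSum p q r u v w - tripleSum p q r u' v' w' ≡
      (((q * r) ^ 2 : ℕ) : ℤ) * (u - u') [ZMOD p ^ 2] :=
  Int.modEq_iff_dvd.mpr
    ⟨-(r ^ 2 * (v - v') + q ^ 2 * (w - w')), by unfold tripleSum; push_cast; ring⟩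

lemma gcd_val_sub_tripleSum_prime_sq {p q r M : ℕ} [NeZero M] (hp : p.Prime)
    (hqr : (q * r).Coprime p) (hpM : p ^ 2 ∣ M) {U : Finset ℤ} (hU : Set.InjOn (· % (p : ℤ)) U)
    {u u' : ℤ} (hu : u ∈ U) (hu' : u' ∈ U) (v w v' w' : ℤ) :
    ((tripleSum p q r u v w : ZMod M) - tripleSum p q r u' v' w').val.gcd (p ^ 2) =
      if u = u' then p ^ 2 else 1 := by
  have hval : (((tripleSum p q r u v w : ZMod M) - tripleSum p q r u' v' w').val : ℤ) ≡
      tripleSum p q r u v w - tripleSum p q r u' v' w' [ZMOD M] := by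
    rw [← Int.cast_sub, ZMod.val_intCast]
    exact Int.mod_modEq _ _
  rw [Nat.gcd_prime_sq_eq_ite hp (hqr.pow_left 2)
    (fun h => sub_eq_zero.mpr (hU hu hu' (Int.modEq_iff_dvd.mpr h).symm))
    ((hval.of_dvd (by exact_mod_cast hpM)).trans (tripleSum_sub_modEq ..))]
  simp only [sub_eq_zero]

lemma gcd_val_sub_tripleSum {p q r M : ℕ} [NeZero M] (hp : p.Prime) (hq : q.Prime)
    (hr : r.Prime) (hpq : p ≠ q) (hqr : q ≠ r) (hpr : p ≠ r) (hM : M = (p * q * r) ^ 2)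
    {U V W : Finset ℤ} (hU : Set.InjOn (· % (p : ℤ)) U) (hV : Set.InjOn (· % (q : ℤ)) V)
    (hW : Set.InjOn (· % (r : ℤ)) W) ⦃u v w u' v' w' : ℤ⦄ (ht : (u, v, w) ∈ U ×ˢ V ×ˢ W)
    (ht' : (u', v', w') ∈ U ×ˢ V ×ˢ W) :
    ((tripleSum p q r u v w : ZMod M) - tripleSum p q r u' v' w').val.gcd (p ^ 2) =
        (if u = u' then p ^ 2 else 1) ∧
      ((tripleSum p q r u v w : ZMod M) - tripleSum p q r u' v' w').val.gcd (q ^ 2) =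
        (if v = v' then q ^ 2 else 1) ∧
      ((tripleSum p q r u v w : ZMod M) - tripleSum p q r u' v' w').val.gcd (r ^ 2) =
        (if w = w' then r ^ 2 else 1) := by
  have coprime {a b c : ℕ} (ha : a.Prime) (hb : b.Prime) (hc : c.Prime) (hab : a ≠ b)
      (hac : a ≠ c) : (b * c).Coprime a :=
    .mul_left ((Nat.coprime_primes hb ha).mpr hab.symm) ((Nat.coprime_primes hc ha).mpr hac.symm)
  simp only [mem_product] at ht ht'
  obtain ⟨hu, hv, hw⟩ := ht
  obtain ⟨hu', hv', hw'⟩ := ht'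
  subst hM
  refine ⟨gcd_val_sub_tripleSum_prime_sq hp (coprime hp hq hr hpq hpr)
    (pow_dvd_pow_of_dvd (dvd_mul_of_dvd_left (dvd_mul_right p q) r) 2) hU hu hu' v w v' w', ?_, ?_⟩
  · simp only [tripleSum_rotate p q r]
    exact gcd_val_sub_tripleSum_prime_sq hq (coprime hq hr hp hqr hpq.symm)
      (pow_dvd_pow_of_dvd (dvd_mul_of_dvd_left (dvd_mul_left q p) r) 2) hV hv hv' w u w' u'
  · simp only [tripleSum_rotate p q r, tripleSum_rotate q r p]
    exact gcd_val_sub_tripleSum_prime_sq hr (coprime hr hp hq hpr.symm hqr.symm)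
      (pow_dvd_pow_of_dvd (dvd_mul_left r (p * q)) 2) hW hw hw' u v u' v'

/-- If `U, V, W` are complete transversals mod `p`, `q`, `r` respectively and
`A = q²r²U + r²p²V + p²q²W ⊆ ℤ_M`, then `|A| = pqr` and
`Div(A) ⊆ {1, p², q², r², p²q², q²r², r²p², M}`. -/
theorem stmt_8 (p q r M : ℕ) (hp : p.Prime) (hq : q.Prime) (hr : r.Prime)
    (hpq : p ≠ q) (hqr : q ≠ r) (hpr : p ≠ r) (hM : M = (p * q * r) ^ 2)
    (U V W : Finset ℤ)
    (hUcard : U.card = p) (hU : ∀ i : ℕ, i < p → ∃ u ∈ U, u % (p : ℤ) = i)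
    (hVcard : V.card = q) (hV : ∀ j : ℕ, j < q → ∃ v ∈ V, v % (q : ℤ) = j)
    (hWcard : W.card = r) (hW : ∀ k : ℕ, k < r → ∃ w ∈ W, w % (r : ℤ) = k)
    (A : Finset (ZMod M))
    (hA : A = (U ×ˢ V ×ˢ W).image fun t =>
      (((q : ℤ) ^ 2 * r ^ 2 * t.1 + (r : ℤ) ^ 2 * p ^ 2 * t.2.1
          + (p : ℤ) ^ 2 * q ^ 2 * t.2.2 : ℤ) : ZMod M)) :
    A.card = p * q * r ∧
    DivSet A ⊆ ({1, p ^ 2, q ^ 2, r ^ 2, p ^ 2 * q ^ 2, q ^ 2 * r ^ 2,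
      r ^ 2 * p ^ 2, M} : Set ℕ) := by
  have : NeZero M := ⟨hM ▸ pow_ne_zero 2 (by simp [hp.ne_zero, hq.ne_zero, hr.ne_zero])⟩
  have hgcd := gcd_val_sub_tripleSum hp hq hr hpq hqr hpr hM (injOn_emod_of_card_eq hUcard hU)
    (injOn_emod_of_card_eq hVcard hV) (injOn_emod_of_card_eq hWcard hW)
  subst hA
  constructor
  · rw [card_image_of_injOn, card_product, card_product, hUcard, hVcard, hWcard, mul_assoc]
    rintro ⟨u, v, w⟩ ht ⟨u', v', w'⟩ ht' h
    obtain ⟨hgp, hgq, hgr⟩ := hgcd ht ht'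
    change (tripleSum p q r u v w : ZMod M) = tripleSum p q r u' v' w' at h
    rw [h, sub_self, ZMod.val_zero, Nat.gcd_zero_left] at hgp hgq hgr
    split_ifs at hgp hgq hgr <;> simp_all [hp.ne_one, hq.ne_one, hr.ne_one]
  · rintro d ⟨a, ha, b, hb, rfl⟩
    obtain ⟨⟨u, v, w⟩, ht, rfl⟩ := mem_image.mp ha
    obtain ⟨⟨u', v', w'⟩, ht', rfl⟩ := mem_image.mp hb
    obtain ⟨hgp, hgq, hgr⟩ := hgcd ht ht'
    change ((tripleSum p q r u v w : ZMod M) - tripleSum p q r u' v' w').val.gcd M ∈ _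
    set n := ((tripleSum p q r u v w : ZMod M) - tripleSum p q r u' v' w').val
    rw [hM, mul_pow, mul_pow,
      Nat.Coprime.gcd_mul_mul _ (.pow 2 2 ((Nat.coprime_primes hp hq).mpr hpq))
        (.pow 2 2 ((Nat.coprime_primes hp hr).mpr hpr))
        (.pow 2 2 ((Nat.coprime_primes hq hr).mpr hqr)),
      hgp, hgq, hgr]
    split_ifs <;> simp [mul_comm]
end

section
/- Let p, q, r be distinct primes, M = (pqr)², and A = q²r²U + r²p²V + p²q²W where U, V, W are complete CRT-transversals as follows: U = {u_i}_{i=0}^{p-1} with u_i ≡ i (mod p), V = {v_j}_{j=0}^{q-1} with v_j ≡ j (mod q), W = {w_k}_{k=0}^{r-1} with w_k ≡ k (mod r). Let B̂ = pqr·{0, 1, ..., pqr-1} ⊆ ℤ_M. Then A ⊕ B̂ = ℤ_M. -/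
open Finset

lemma transversal_inj (p : ℕ) (hp : 0 < p) (U : Finset ℤ) (hUcard : U.card = p)
    (hU : ∀ i : ℕ, i < p → ∃ u ∈ U, u % (p : ℤ) = i) :
    ∀ u ∈ U, ∀ u' ∈ U, (p:ℤ) ∣ u - u' → u = u' := by
  haveI : NeZero p := ⟨hp.ne'⟩
  have hsurj : Finset.univ ⊆ U.image (Int.cast : ℤ → ZMod p) := by
    intro z _
    obtain ⟨u, hu, hmod⟩ := hU z.val (ZMod.val_lt z)
    refine Finset.mem_image.mpr ⟨u, hu, ?_⟩
    have : ((u % (p:ℤ) : ℤ) : ZMod p) = ((z.val : ℤ) : ZMod p) := by rw [hmod]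
    rw [ZMod.intCast_mod] at this
    simpa [ZMod.natCast_val, ZMod.intCast_cast] using this
  have hcard : (U.image (Int.cast : ℤ → ZMod p)).card = U.card := by
    have h1 : (U.image (Int.cast : ℤ → ZMod p)).card ≤ U.card := Finset.card_image_le
    have h2 : p ≤ (U.image (Int.cast : ℤ → ZMod p)).card := by
      calc p = Fintype.card (ZMod p) := (ZMod.card p).symm
        _ = (Finset.univ : Finset (ZMod p)).card := rfl
        _ ≤ _ := Finset.card_le_card hsurj
    omega
  have hinj : Set.InjOn (fun u : ℤ => (u : ZMod p)) U := Finset.card_image_iff.mp hcard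
  intro u hu u' hu' hdvd
  refine hinj hu hu' ?_
  have : ((u - u' : ℤ) : ZMod p) = 0 := (ZMod.intCast_zmod_eq_zero_iff_dvd _ _).mpr hdvd
  push_cast at this
  simpa [sub_eq_zero] using this

/-- If `U, V, W` are complete CRT-transversals mod `p`, `q`, `r` and
`A = q²r²U + r²p²V + p²q²W`, `B̂ = pqr·{0, …, pqr-1}`, then `A ⊕ B̂ = ℤ_M`. -/
theorem stmt_9 (p q r M : ℕ) (hp : p.Prime) (hq : q.Prime) (hr : r.Prime)
    (hpq : p ≠ q) (hqr : q ≠ r) (hpr : p ≠ r) (hM : M = (p * q * r) ^ 2)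
    (U V W : Finset ℤ)
    (hUcard : U.card = p) (hU : ∀ i : ℕ, i < p → ∃ u ∈ U, u % (p : ℤ) = i)
    (hVcard : V.card = q) (hV : ∀ j : ℕ, j < q → ∃ v ∈ V, v % (q : ℤ) = j)
    (hWcard : W.card = r) (hW : ∀ k : ℕ, k < r → ∃ w ∈ W, w % (r : ℤ) = k)
    (A : Finset (ZMod M))
    (hA : A = (U ×ˢ V ×ˢ W).image fun t =>
      (((q : ℤ) ^ 2 * r ^ 2 * t.1 + (r : ℤ) ^ 2 * p ^ 2 * t.2.1
          + (p : ℤ) ^ 2 * q ^ 2 * t.2.2 : ℤ) : ZMod M))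
    (Bhat : Finset (ZMod M))
    (hB : Bhat = (Finset.range (p * q * r)).image fun k =>
      ((p * q * r * k : ℕ) : ZMod M)) :
    Tiles A Bhat := by
  have hp0 := hp.pos
  have hq0 := hq.pos
  have hr0 := hr.pos
  set N := p * q * r with hN
  have hN0 : 0 < N := by positivity
  have hM0 : 0 < M := by rw [hM]; positivity
  haveI : NeZero M := ⟨hM0.ne'⟩
  -- the integer-valued function
  set f : (ℤ × ℤ × ℤ) × ℕ → ℤ := fun x =>
    (q : ℤ) ^ 2 * r ^ 2 * x.1.1 + (r : ℤ) ^ 2 * p ^ 2 * x.1.2.1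
      + (p : ℤ) ^ 2 * q ^ 2 * x.1.2.2 + (N : ℤ) * x.2 with hf
  set D : Finset ((ℤ × ℤ × ℤ) × ℕ) := (U ×ˢ V ×ˢ W) ×ˢ Finset.range N with hD
  -- helper: coprime divisibility
  have key : ∀ x ∈ D, ∀ y ∈ D, ((f x : ℤ) : ZMod M) = ((f y : ℤ) : ZMod M) → x = y := by
    rintro ⟨⟨u, v, w⟩, k⟩ hx ⟨⟨u', v', w'⟩, k'⟩ hy heq
    simp only [hD, Finset.mem_product, Finset.mem_range] at hx hy
    obtain ⟨⟨hu, hv, hw⟩, hk⟩ := hx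
    obtain ⟨⟨hu', hv', hw'⟩, hk'⟩ := hy
    have hdvd : (M : ℤ) ∣ f (⟨u, v, w⟩, k) - f (⟨u', v', w'⟩, k') := by
      exact ((ZMod.intCast_eq_intCast_iff _ _ _).mp heq).symm.dvd
    have hMN : (M : ℤ) = (N : ℤ) * N := by rw [hM, hN]; push_cast; ring
    -- divisibility by p, q, r of the whole difference
    have hprime : ∀ s : ℕ, s.Prime → (∀ t : ℕ, t.Prime → s ≠ t → ¬ (s : ℤ) ∣ (t : ℤ)) := by
      intro s hs t ht hst hd
      exact hst ((Nat.prime_dvd_prime_iff_eq hs ht).mp (Int.ofNat_dvd.mp hd))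
    -- u = u'
    have hpu : (p : ℤ) ∣ u - u' := by
      have h1 : (p : ℤ) ∣ f (⟨u, v, w⟩, k) - f (⟨u', v', w'⟩, k') := by
        refine dvd_trans ?_ hdvd
        rw [hMN, hN]; push_cast
        exact ⟨(p:ℤ) * (q:ℤ)^2 * (r:ℤ)^2, by ring⟩
      have h2 : (p : ℤ) ∣ (q : ℤ) ^ 2 * r ^ 2 * (u - u') := by
        have : (q:ℤ)^2 * r^2 * (u - u') = (f (⟨u, v, w⟩, k) - f (⟨u', v', w'⟩, k'))
            - (p : ℤ) * ((r:ℤ)^2 * p * (v - v') + (p:ℤ) * q^2 * (w - w') + q * r * (k - k')) := by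
          simp only [hf, hN]; push_cast; ring
        rw [this]
        exact dvd_sub h1 (Dvd.intro _ rfl)
      have hip : Prime (p : ℤ) := Nat.prime_iff_prime_int.mp hp
      rcases hip.dvd_mul.mp h2 with h | h
      · rcases hip.dvd_mul.mp h with h | h
        · exact absurd (hip.dvd_of_dvd_pow h) (hprime p hp q hq hpq)
        · exact absurd (hip.dvd_of_dvd_pow h) (hprime p hp r hr hpr)
      · exact h
    have huu : u = u' := transversal_inj p hp0 U hUcard hU u hu u' hu' hpu
    have hqv : (q : ℤ) ∣ v - v' := by
      have h1 : (q : ℤ) ∣ f (⟨u, v, w⟩, k) - f (⟨u', v', w'⟩, k') := by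
        refine dvd_trans ?_ hdvd
        rw [hMN, hN]; push_cast
        exact ⟨(q:ℤ) * (p:ℤ)^2 * (r:ℤ)^2, by ring⟩
      have h2 : (q : ℤ) ∣ (r : ℤ) ^ 2 * p ^ 2 * (v - v') := by
        have : (r:ℤ)^2 * p^2 * (v - v') = (f (⟨u, v, w⟩, k) - f (⟨u', v', w'⟩, k'))
            - (q : ℤ) * ((q:ℤ) * r^2 * (u - u') + (p:ℤ)^2 * q * (w - w') + p * r * (k - k')) := by
          simp only [hf, hN]; push_cast; ring
        rw [this]
        exact dvd_sub h1 (Dvd.intro _ rfl)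
      have hip : Prime (q : ℤ) := Nat.prime_iff_prime_int.mp hq
      rcases hip.dvd_mul.mp h2 with h | h
      · rcases hip.dvd_mul.mp h with h | h
        · exact absurd (hip.dvd_of_dvd_pow h) (hprime q hq r hr hqr)
        · exact absurd (hip.dvd_of_dvd_pow h) (hprime q hq p hp (Ne.symm hpq))
      · exact h
    have hvv : v = v' := transversal_inj q hq0 V hVcard hV v hv v' hv' hqv
    have hrw : (r : ℤ) ∣ w - w' := by
      have h1 : (r : ℤ) ∣ f (⟨u, v, w⟩, k) - f (⟨u', v', w'⟩, k') := by
        refine dvd_trans ?_ hdvd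
        rw [hMN, hN]; push_cast
        exact ⟨(r:ℤ) * (p:ℤ)^2 * (q:ℤ)^2, by ring⟩
      have h2 : (r : ℤ) ∣ (p : ℤ) ^ 2 * q ^ 2 * (w - w') := by
        have : (p:ℤ)^2 * q^2 * (w - w') = (f (⟨u, v, w⟩, k) - f (⟨u', v', w'⟩, k'))
            - (r : ℤ) * ((q:ℤ)^2 * r * (u - u') + (r:ℤ) * p^2 * (v - v') + p * q * (k - k')) := by
          simp only [hf, hN]; push_cast; ring
        rw [this]
        exact dvd_sub h1 (Dvd.intro _ rfl)
      have hip : Prime (r : ℤ) := Nat.prime_iff_prime_int.mp hr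
      rcases hip.dvd_mul.mp h2 with h | h
      · rcases hip.dvd_mul.mp h with h | h
        · exact absurd (hip.dvd_of_dvd_pow h) (hprime r hr p hp (Ne.symm hpr))
        · exact absurd (hip.dvd_of_dvd_pow h) (hprime r hr q hq (Ne.symm hqr))
      · exact h
    have hww : w = w' := transversal_inj r hr0 W hWcard hW w hw w' hw' hrw
    subst huu hvv hww
    have hkk : k = k' := by
      have h1 : (N : ℤ) * N ∣ (N : ℤ) * ((k : ℤ) - k') := by
        rw [← hMN]
        have : (N : ℤ) * ((k : ℤ) - k') = f (⟨u, v, w⟩, k) - f (⟨u, v, w⟩, k') := by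
          simp only [hf]; ring
        rw [this]; exact hdvd
      have h2 : (N : ℤ) ∣ (k : ℤ) - k' :=
        (mul_dvd_mul_iff_left (by exact_mod_cast hN0.ne' : (N:ℤ) ≠ 0)).mp h1
      have h3 : ((k:ℤ) - k') = 0 := Int.eq_zero_of_abs_lt_dvd h2 (by
        rw [abs_sub_lt_iff]; omega)
      omega
    simp [hkk]
  -- cardinality
  have hDcard : D.card = M := by
    simp only [hD, Finset.card_product, hUcard, hVcard, hWcard, Finset.card_range, hM, hN]
    ring
  set G : (ℤ × ℤ × ℤ) × ℕ → ZMod M := fun x => ((f x : ℤ) : ZMod M) with hG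
  have hinj : Set.InjOn G D := fun x hx y hy h => key x hx y hy h
  have himg : D.image G = Finset.univ := by
    apply Finset.eq_univ_of_card
    rw [Finset.card_image_of_injOn hinj, hDcard]
    exact (ZMod.card M).symm
  intro g
  have hg : g ∈ D.image G := by rw [himg]; exact Finset.mem_univ g
  obtain ⟨x, hxD, hxg⟩ := Finset.mem_image.mp hg
  obtain ⟨⟨u, v, w⟩, k⟩ := x
  have hxD' := hxD
  simp only [hD, Finset.mem_product, Finset.mem_range] at hxD'
  obtain ⟨⟨hu, hv, hw⟩, hk⟩ := hxD'
  refine ⟨⟨(((q:ℤ)^2*r^2*u + (r:ℤ)^2*p^2*v + (p:ℤ)^2*q^2*w : ℤ) : ZMod M),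
    ((N*k : ℕ) : ZMod M)⟩, ⟨?_, ?_, ?_⟩, ?_⟩
  · rw [hA]
    exact Finset.mem_image.mpr ⟨(u, v, w), Finset.mem_product.mpr
      ⟨hu, Finset.mem_product.mpr ⟨hv, hw⟩⟩, rfl⟩
  · rw [hB]
    exact Finset.mem_image.mpr ⟨k, Finset.mem_range.mpr hk, rfl⟩
  · rw [← hxg]
    simp only [hG, hf]
    push_cast
    ring
  · rintro ⟨a, b⟩ ⟨ha, hb, hab⟩
    rw [hA] at ha
    obtain ⟨⟨u', v', w'⟩, ht', ha'⟩ := Finset.mem_image.mp ha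
    rw [Finset.mem_product] at ht'
    obtain ⟨hu', ht''⟩ := ht'
    rw [Finset.mem_product] at ht''
    obtain ⟨hv', hw'⟩ := ht''
    rw [hB] at hb
    obtain ⟨k', hk', hb'⟩ := Finset.mem_image.mp hb
    rw [Finset.mem_range] at hk'
    have hGx' : G ((u', v', w'), k') = g := by
      rw [← hab, ← ha', ← hb']
      simp only [hG, hf]
      push_cast
      ring
    have hmem' : ((u', v', w'), k') ∈ D := by
      simp only [hD, Finset.mem_product, Finset.mem_range]
      exact ⟨⟨hu', hv', hw'⟩, hk'⟩
    have heq := key _ hmem' _ hxD (hGx'.trans hxg.symm)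
    have h1 : (u' = u ∧ v' = v ∧ w' = w) ∧ k' = k := by
      simpa [Prod.ext_iff] using heq
    obtain ⟨⟨e1, e2, e3⟩, e4⟩ := h1
    subst e1; subst e2; subst e3; subst e4
    exact Prod.ext (by rw [← ha']) (by rw [← hb'])
end

section
/- Let M = p²q²r² with p, q, r distinct primes, and let A, B ⊆ ℤ_M with A ⊕ B = ℤ_M, |A| = |B| = pqr, and Div(A) = {1, p², q², r², p²q², q²r², r²p², M}. Suppose D ⊆ B satisfies D = D + rp²q² (D is invariant under translation by rp²q²). Then A ⊕ B̂ = ℤ_M where B̂ = (B \ D) ∪ (D + p²q²). -/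
open Finset

lemma divsq {p q r d : ℕ} (hp : p.Prime) (hq : q.Prime) (hr : r.Prime)
    (hpq : p ≠ q) (hpr : p ≠ r)
    (hd : d = 1 ∨ d = p^2 ∨ d = q^2 ∨ d = r^2 ∨ d = p^2*q^2 ∨ d = q^2*r^2 ∨
      d = r^2*p^2 ∨ d = p^2*q^2*r^2)
    (h : p ∣ d) : p^2 ∣ d := by
  have hq' : ¬ p ∣ q^2 := fun hh =>
    hpq ((Nat.prime_dvd_prime_iff_eq hp hq).mp (hp.dvd_of_dvd_pow hh))
  have hr' : ¬ p ∣ r^2 := fun hh =>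
    hpr ((Nat.prime_dvd_prime_iff_eq hp hr).mp (hp.dvd_of_dvd_pow hh))
  have hqr' : ¬ p ∣ q^2 * r^2 := fun hh => by
    rcases (Nat.Prime.dvd_mul hp).mp hh with h1 | h1
    exacts [hq' h1, hr' h1]
  have h1' : ¬ p ∣ 1 := fun hh => hp.one_lt.ne' (Nat.eq_one_of_dvd_one hh)
  rcases hd with rfl|rfl|rfl|rfl|rfl|rfl|rfl|rfl
  · exact absurd h h1'
  · exact dvd_rfl
  · exact absurd h hq'
  · exact absurd h hr'
  · exact Dvd.dvd.mul_right dvd_rfl _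
  · exact absurd h hqr'
  · exact dvd_mul_left _ _
  · exact Dvd.dvd.mul_right (Dvd.dvd.mul_right dvd_rfl _) _

lemma divall {p q r d : ℕ} (hp : p.Prime) (hq : q.Prime) (hr : r.Prime)
    (hpq : p ≠ q) (hqr : q ≠ r) (hpr : p ≠ r)
    (hd : d = 1 ∨ d = p^2 ∨ d = q^2 ∨ d = r^2 ∨ d = p^2*q^2 ∨ d = q^2*r^2 ∨
      d = r^2*p^2 ∨ d = p^2*q^2*r^2)
    (h1 : p ∣ d) (h2 : q ∣ d) (h3 : r ∣ d) : d = p^2*q^2*r^2 := by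
  have key : ∀ a b : ℕ, a.Prime → b.Prime → a ≠ b → ¬ a ∣ b^2 := fun a b ha hb hab hh =>
    hab ((Nat.prime_dvd_prime_iff_eq ha hb).mp (ha.dvd_of_dvd_pow hh))
  have hmul : ∀ a b c : ℕ, a.Prime → ¬ a ∣ b → ¬ a ∣ c → ¬ a ∣ b * c := fun a b c ha hb hc hh => by
    rcases (Nat.Prime.dvd_mul ha).mp hh with h | h
    exacts [hb h, hc h]
  rcases hd with rfl|rfl|rfl|rfl|rfl|rfl|rfl|rfl
  · exact absurd (Nat.eq_one_of_dvd_one h1) hp.one_lt.ne'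
  · exact absurd h2 (key q p hq hp (Ne.symm hpq))
  · exact absurd h1 (key p q hp hq hpq)
  · exact absurd h1 (key p r hp hr hpr)
  · exact absurd h3 (hmul _ _ _ hr (key r p hr hp (Ne.symm hpr)) (key r q hr hq (Ne.symm hqr)))
  · exact absurd h1 (hmul _ _ _ hp (key p q hp hq hpq) (key p r hp hr hpr))
  · exact absurd h2 (hmul _ _ _ hq (key q r hq hr hqr) (key q p hq hp (Ne.symm hpq)))
  · rfl

/-- Lemma 3.1: if `Div(A) = {1, p², q², r², p²q², q²r², r²p², M}` and `D ⊆ B` is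
invariant under translation by `rp²q²`, then `A ⊕ B̂ = ℤ_M` for
`B̂ = (B \ D) ∪ (D + p²q²)`. -/
theorem stmt_10 (p q r M : ℕ) (hp : p.Prime) (hq : q.Prime) (hr : r.Prime)
    (hpq : p ≠ q) (hqr : q ≠ r) (hpr : p ≠ r) (hM : M = p ^ 2 * q ^ 2 * r ^ 2)
    (A B : Finset (ZMod M)) (hT : Tiles A B)
    (hA : A.card = p * q * r) (hB : B.card = p * q * r)
    (hDiv : DivSet A = ({1, p ^ 2, q ^ 2, r ^ 2, p ^ 2 * q ^ 2, q ^ 2 * r ^ 2,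
      r ^ 2 * p ^ 2, M} : Set ℕ))
    (D : Finset (ZMod M)) (hD : D ⊆ B)
    (hper : D.image (fun x => x + ((r * p ^ 2 * q ^ 2 : ℕ) : ZMod M)) = D) :
    Tiles A ((B \ D) ∪ D.image (fun x => x + ((p ^ 2 * q ^ 2 : ℕ) : ZMod M))) := by
  have hp0 := hp.pos
  have hq0 := hq.pos
  have hr0 := hr.pos
  have hM0 : 0 < M := by rw [hM]; positivity
  haveI : NeZero M := ⟨hM0.ne'⟩
  haveI : NeZero p := ⟨hp0.ne'⟩
  haveI : NeZero q := ⟨hq0.ne'⟩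
  haveI : NeZero r := ⟨hr0.ne'⟩
  have hpM : p ∣ M := ⟨p * q ^ 2 * r ^ 2, by rw [hM]; ring⟩
  have hqM : q ∣ M := ⟨p ^ 2 * q * r ^ 2, by rw [hM]; ring⟩
  have hrM : r ∣ M := ⟨p ^ 2 * q ^ 2 * r, by rw [hM]; ring⟩
  have hp2M : p ^ 2 ∣ M := ⟨q ^ 2 * r ^ 2, by rw [hM]; ring⟩
  have hq2M : q ^ 2 ∣ M := ⟨p ^ 2 * r ^ 2, by rw [hM]; ring⟩
  -- the casting homomorphisms
  set πp := ZMod.castHom hpM (ZMod p) with hπp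
  set πq := ZMod.castHom hqM (ZMod q) with hπq
  set πr := ZMod.castHom hrM (ZMod r) with hπr
  set πp2 := ZMod.castHom hp2M (ZMod (p ^ 2)) with hπp2
  set πq2 := ZMod.castHom hq2M (ZMod (q ^ 2)) with hπq2
  -- bridge between castHom vanishing and divisibility of val
  have hbr : ∀ (n : ℕ) (hn : n ∣ M) (x : ZMod M),
      (ZMod.castHom hn (ZMod n)) x = 0 ↔ n ∣ x.val := by
    intro n hn x
    rw [ZMod.castHom_apply, ← ZMod.natCast_val, ZMod.natCast_eq_zero_iff]
  -- membership in the divisor set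
  have hmem : ∀ a ∈ A, ∀ a' ∈ A, (Nat.gcd ((a - a').val) M = 1 ∨
      Nat.gcd ((a - a').val) M = p^2 ∨ Nat.gcd ((a - a').val) M = q^2 ∨
      Nat.gcd ((a - a').val) M = r^2 ∨ Nat.gcd ((a - a').val) M = p^2*q^2 ∨
      Nat.gcd ((a - a').val) M = q^2*r^2 ∨ Nat.gcd ((a - a').val) M = r^2*p^2 ∨
      Nat.gcd ((a - a').val) M = p^2*q^2*r^2) := by
    intro a ha a' ha'
    have hx : Nat.gcd ((a - a').val) M ∈ DivSet A := ⟨a, ha, a', ha', rfl⟩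
    rw [hDiv] at hx
    simp only [Set.mem_insert_iff, Set.mem_singleton_iff] at hx
    rcases hx with h|h|h|h|h|h|h|h
    · exact Or.inl h
    · exact Or.inr (Or.inl h)
    · exact Or.inr (Or.inr (Or.inl h))
    · exact Or.inr (Or.inr (Or.inr (Or.inl h)))
    · exact Or.inr (Or.inr (Or.inr (Or.inr (Or.inl h))))
    · exact Or.inr (Or.inr (Or.inr (Or.inr (Or.inr (Or.inl h)))))
    · exact Or.inr (Or.inr (Or.inr (Or.inr (Or.inr (Or.inr (Or.inl h))))))
    · exact Or.inr (Or.inr (Or.inr (Or.inr (Or.inr (Or.inr (Or.inr (h.trans hM)))))))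
  -- F2 : first-power congruence implies second-power congruence, for p and q
  have F2p : ∀ a ∈ A, ∀ a' ∈ A, p ∣ (a - a').val → p ^ 2 ∣ (a - a').val := by
    intro a ha a' ha' h
    have h1 : p ∣ Nat.gcd ((a - a').val) M := Nat.dvd_gcd h hpM
    have h2 : p ^ 2 ∣ Nat.gcd ((a - a').val) M :=
      divsq hp hq hr hpq hpr (hmem a ha a' ha') h1
    exact h2.trans (Nat.gcd_dvd_left _ _)
  have F2q : ∀ a ∈ A, ∀ a' ∈ A, q ∣ (a - a').val → q ^ 2 ∣ (a - a').val := by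
    intro a ha a' ha' h
    have h1 : q ∣ Nat.gcd ((a - a').val) M := Nat.dvd_gcd h hqM
    have h2 : q ^ 2 ∣ Nat.gcd ((a - a').val) M := by
      refine divsq hq hp hr (Ne.symm hpq) hqr ?_ h1
      rcases hmem a ha a' ha' with h|h|h|h|h|h|h|h
      · exact Or.inl h
      · exact Or.inr (Or.inr (Or.inl h))
      · exact Or.inr (Or.inl h)
      · exact Or.inr (Or.inr (Or.inr (Or.inl h)))
      · exact Or.inr (Or.inr (Or.inr (Or.inr (Or.inl (h.trans (by ring))))))
      · exact Or.inr (Or.inr (Or.inr (Or.inr (Or.inr (Or.inr (Or.inl (h.trans (by ring))))))))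
      · exact Or.inr (Or.inr (Or.inr (Or.inr (Or.inr (Or.inl (h.trans (by ring)))))))
      · exact Or.inr (Or.inr (Or.inr (Or.inr (Or.inr (Or.inr (Or.inr (h.trans (by ring))))))))
    exact h2.trans (Nat.gcd_dvd_left _ _)
  -- injectivity of the digit map on A
  have hinj : Set.InjOn (fun x => (πp x, πq x, πr x)) (A : Set (ZMod M)) := by
    intro a ha a' ha' h
    simp only [Prod.mk.injEq] at h
    obtain ⟨e1, e2, e3⟩ := h
    by_contra hne
    have hps : p ∣ (a - a').val := by
      rw [← hbr p hpM]
      show πp (a - a') = 0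
      rw [map_sub, e1, sub_self]
    have hqs : q ∣ (a - a').val := by
      rw [← hbr q hqM]
      show πq (a - a') = 0
      rw [map_sub, e2, sub_self]
    have hrs : r ∣ (a - a').val := by
      rw [← hbr r hrM]
      show πr (a - a') = 0
      rw [map_sub, e3, sub_self]
    have hg := divall hp hq hr hpq hqr hpr (hmem a ha a' ha')
      (Nat.dvd_gcd hps hpM) (Nat.dvd_gcd hqs hqM) (Nat.dvd_gcd hrs hrM)
    have hMg : M ∣ (a - a').val := by
      have h0 := Nat.gcd_dvd_left ((a - a').val) M
      rwa [hg, ← hM] at h0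
    have hv0 : (a - a').val ≠ 0 := by
      intro h0
      exact hne (sub_eq_zero.mp ((ZMod.val_eq_zero _).mp h0))
    exact absurd (Nat.le_of_dvd (Nat.pos_of_ne_zero hv0) hMg) (not_le.mpr (ZMod.val_lt _))
  -- surjectivity of the digit map on A
  have hcard : Fintype.card (ZMod p × ZMod q × ZMod r) = p * q * r := by
    simp [ZMod.card, mul_assoc]
  have himg : A.image (fun x => (πp x, πq x, πr x)) = Finset.univ := by
    apply Finset.eq_univ_of_card
    rw [Finset.card_image_of_injOn hinj, hA, hcard]
  have hsurj : ∀ t : ZMod p × ZMod q × ZMod r, ∃ a ∈ A, (πp a, πq a, πr a) = t := by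
    intro t
    have ht : t ∈ A.image (fun x => (πp x, πq x, πr x)) := by
      rw [himg]; exact Finset.mem_univ t
    obtain ⟨a, ha, hfa⟩ := Finset.mem_image.mp ht
    exact ⟨a, ha, hfa⟩
  -- the approximation lemma: a + z can be written as a₁ + w with a₁ ∈ A and w
  -- a multiple of p²q²r, provided z ≡ 0 mod p² and mod q².
  have LW : ∀ a ∈ A, ∀ z : ZMod M, πp2 z = 0 → πq2 z = 0 →
      ∃ a₁ ∈ A, ∃ w : ZMod M, (p ^ 2 * q ^ 2 * r) ∣ w.val ∧ a₁ + w = a + z := by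
    intro a ha z hz1 hz2
    obtain ⟨a₁, ha₁, hψ⟩ := hsurj (πp a, πq a, πr (a + z))
    simp only [Prod.mk.injEq] at hψ
    obtain ⟨e1, e2, e3⟩ := hψ
    refine ⟨a₁, ha₁, a + z - a₁, ?_, by ring⟩
    have dp1 : p ∣ (a₁ - a).val := by
      rw [← hbr p hpM]
      show πp (a₁ - a) = 0
      rw [map_sub, e1, sub_self]
    have dp2 : πp2 (a₁ - a) = 0 := by
      rw [hπp2, hbr _ hp2M]
      exact F2p a₁ ha₁ a ha dp1
    have dp : p ^ 2 ∣ (a + z - a₁).val := by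
      rw [← hbr _ hp2M]
      show πp2 (a + z - a₁) = 0
      have hz' : (a + z - a₁ : ZMod M) = z - (a₁ - a) := by ring
      rw [hz', map_sub, dp2, sub_zero, hz1]
    have dq1 : q ∣ (a₁ - a).val := by
      rw [← hbr q hqM]
      show πq (a₁ - a) = 0
      rw [map_sub, e2, sub_self]
    have dq2 : πq2 (a₁ - a) = 0 := by
      rw [hπq2, hbr _ hq2M]
      exact F2q a₁ ha₁ a ha dq1
    have dq : q ^ 2 ∣ (a + z - a₁).val := by
      rw [← hbr _ hq2M]
      show πq2 (a + z - a₁) = 0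
      have hz' : (a + z - a₁ : ZMod M) = z - (a₁ - a) := by ring
      rw [hz', map_sub, dq2, sub_zero, hz2]
    have dr : r ∣ (a + z - a₁).val := by
      rw [← hbr _ hrM]
      show πr (a + z - a₁) = 0
      rw [map_sub, e3, sub_self]
    have c1 : Nat.Coprime (p ^ 2) (q ^ 2) :=
      Nat.Coprime.pow 2 2 ((Nat.coprime_primes hp hq).mpr hpq)
    have c2 : Nat.Coprime (p ^ 2 * q ^ 2) r :=
      Nat.Coprime.mul (Nat.Coprime.pow_left 2 ((Nat.coprime_primes hp hr).mpr hpr))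
        (Nat.Coprime.pow_left 2 ((Nat.coprime_primes hq hr).mpr hqr))
    exact Nat.Coprime.mul_dvd_of_dvd_of_dvd c2
      (Nat.Coprime.mul_dvd_of_dvd_of_dvd c1 dp dq) dr
  -- D is closed under adding multiples of p²q²r
  have hstep : ∀ x ∈ D, x + ((p ^ 2 * q ^ 2 * r : ℕ) : ZMod M) ∈ D := by
    intro x hx
    have hc : ((p ^ 2 * q ^ 2 * r : ℕ) : ZMod M) = ((r * p ^ 2 * q ^ 2 : ℕ) : ZMod M) := by
      norm_num [mul_comm, mul_assoc, mul_left_comm]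
    rw [hc, ← hper]
    exact Finset.mem_image_of_mem _ hx
  have Dcl : ∀ k : ℕ, ∀ x ∈ D, x + ((p ^ 2 * q ^ 2 * r * k : ℕ) : ZMod M) ∈ D := by
    intro k
    induction k with
    | zero => intro x hx; simpa using hx
    | succ n ih =>
      intro x hx
      have hc : ((p ^ 2 * q ^ 2 * r * (n + 1) : ℕ) : ZMod M)
          = ((p ^ 2 * q ^ 2 * r * n : ℕ) : ZMod M) + ((p ^ 2 * q ^ 2 * r : ℕ) : ZMod M) := by
        push_cast
        ring
      rw [hc, ← add_assoc]
      exact hstep _ (ih x hx)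
  have Dw : ∀ w : ZMod M, (p ^ 2 * q ^ 2 * r) ∣ w.val → ∀ x ∈ D, x + w ∈ D := by
    intro w hw x hx
    obtain ⟨k, hk⟩ := hw
    have hwk : w = ((p ^ 2 * q ^ 2 * r * k : ℕ) : ZMod M) := by
      rw [← hk, ZMod.natCast_zmod_val]
    rw [hwk]
    exact Dcl k x hx
  -- the shift ν and its congruences
  set ν : ZMod M := ((p ^ 2 * q ^ 2 : ℕ) : ZMod M) with hνdef
  have hν1 : πp2 ν = 0 := by
    rw [hνdef, map_natCast]
    exact (ZMod.natCast_eq_zero_iff _ _).mpr ⟨q ^ 2, rfl⟩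
  have hν2 : πq2 ν = 0 := by
    rw [hνdef, map_natCast]
    exact (ZMod.natCast_eq_zero_iff _ _).mpr ⟨p ^ 2, by ring⟩
  have hν1' : πp2 (-ν) = 0 := by rw [map_neg, hν1, neg_zero]
  have hν2' : πq2 (-ν) = 0 := by rw [map_neg, hν2, neg_zero]
  -- forward lemma
  have L1 : ∀ α δ γ β : ZMod M, α ∈ A → δ ∈ D → γ ∈ A → β ∈ B →
      γ + β = α + δ + ν → β ∈ D := by
    intro α δ γ β hα hδ hγ hβ heq
    obtain ⟨a₁, ha₁, w, hw, hsum⟩ := LW α hα ν hν1 hν2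
    have hδw : δ + w ∈ D := Dw w hw δ hδ
    have hbd : (a₁, δ + w).1 ∈ A ∧ (a₁, δ + w).2 ∈ B ∧ (a₁, δ + w).1 + (a₁, δ + w).2 = γ + β :=
      ⟨ha₁, hD hδw, by show a₁ + (δ + w) = γ + β; rw [heq]; linear_combination hsum⟩
    have hun := (hT (γ + β)).unique hbd
      (show (γ, β).1 ∈ A ∧ (γ, β).2 ∈ B ∧ (γ, β).1 + (γ, β).2 = γ + β from ⟨hγ, hβ, rfl⟩)
    have : δ + w = β := congrArg Prod.snd hun
    rwa [← this]
  -- backward lemma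
  have L2 : ∀ α β γ δ : ZMod M, α ∈ A → β ∈ B → γ ∈ A → δ ∈ D →
      γ + δ = α + β + ν → β ∈ D := by
    intro α β γ δ hα hβ hγ hδ heq
    obtain ⟨a₁, ha₁, w, hw, hsum⟩ := LW γ hγ (-ν) hν1' hν2'
    have hδw : δ + w ∈ D := Dw w hw δ hδ
    have hbd : (a₁, δ + w).1 ∈ A ∧ (a₁, δ + w).2 ∈ B ∧ (a₁, δ + w).1 + (a₁, δ + w).2 = α + β :=
      ⟨ha₁, hD hδw, by show a₁ + (δ + w) = α + β; linear_combination hsum + heq⟩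
    have hun := (hT (α + β)).unique hbd
      (show (α, β).1 ∈ A ∧ (α, β).2 ∈ B ∧ (α, β).1 + (α, β).2 = α + β from ⟨hα, hβ, rfl⟩)
    have : δ + w = β := congrArg Prod.snd hun
    rwa [← this]
  -- main argument
  intro g
  -- uniqueness of representations with the new set
  have KEY : ∀ y₁ y₂ : ZMod M × ZMod M,
      (y₁.1 ∈ A ∧ y₁.2 ∈ (B \ D) ∪ D.image (fun x => x + ν) ∧ y₁.1 + y₁.2 = g) →
      (y₂.1 ∈ A ∧ y₂.2 ∈ (B \ D) ∪ D.image (fun x => x + ν) ∧ y₂.1 + y₂.2 = g) →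
      y₁ = y₂ := by
    have MIX : ∀ α β γ β' : ZMod M, α ∈ A → β ∈ B \ D → γ ∈ A →
        β' ∈ D.image (fun x => x + ν) → α + β = g → γ + β' = g → False := by
      intro α β γ β' hα hβ hγ hβ' hs hs'
      obtain ⟨d', hd', rfl⟩ := Finset.mem_image.mp hβ'
      have hβB := (Finset.mem_sdiff.mp hβ).1
      have hβD := (Finset.mem_sdiff.mp hβ).2
      exact hβD (L1 γ d' α β hγ hd' hα hβB (by rw [hs, ← hs']; ring))
    rintro ⟨α, β⟩ ⟨α', β'⟩ ⟨hα, hβ, hs⟩ ⟨hα', hβ', hs'⟩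
    rcases Finset.mem_union.mp hβ with h1 | h1 <;>
      rcases Finset.mem_union.mp hβ' with h2 | h2
    · exact (hT g).unique ⟨hα, (Finset.mem_sdiff.mp h1).1, hs⟩
        ⟨hα', (Finset.mem_sdiff.mp h2).1, hs'⟩
    · exact absurd (MIX α β α' β' hα h1 hα' h2 hs hs') id
    · exact absurd (MIX α' β' α β hα' h2 hα h1 hs' hs) id
    · obtain ⟨d, hd', rfl⟩ := Finset.mem_image.mp h1
      obtain ⟨d'', hd'', rfl⟩ := Finset.mem_image.mp h2
      have e1 : (α, d).1 ∈ A ∧ (α, d).2 ∈ B ∧ (α, d).1 + (α, d).2 = g - ν :=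
        ⟨hα, hD hd', by show α + d = g - ν; rw [← hs]; ring⟩
      have e2 : (α', d'').1 ∈ A ∧ (α', d'').2 ∈ B ∧ (α', d'').1 + (α', d'').2 = g - ν :=
        ⟨hα', hD hd'', by show α' + d'' = g - ν; rw [← hs']; ring⟩
      have hun := (hT (g - ν)).unique e1 e2
      have hfst : α = α' := congrArg Prod.fst hun
      have hsnd : d = d'' := congrArg Prod.snd hun
      rw [hfst, hsnd]
  obtain ⟨⟨a, b⟩, ⟨ha, hb, hab⟩, -⟩ := hT g
  by_cases hbD : b ∈ D
  · obtain ⟨⟨a₂, b₂⟩, ⟨ha₂, hb₂, hab₂⟩, -⟩ := hT (g - ν)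
    have hb₂D : b₂ ∈ D := L2 a₂ b₂ a b ha₂ hb₂ ha hbD (by rw [hab, hab₂]; ring)
    have hW : ((a₂, b₂ + ν) : ZMod M × ZMod M).1 ∈ A ∧
        ((a₂, b₂ + ν) : ZMod M × ZMod M).2 ∈ (B \ D) ∪ D.image (fun x => x + ν) ∧
        ((a₂, b₂ + ν) : ZMod M × ZMod M).1 + ((a₂, b₂ + ν) : ZMod M × ZMod M).2 = g := by
      refine ⟨ha₂, Finset.mem_union.mpr (Or.inr (Finset.mem_image_of_mem _ hb₂D)), ?_⟩
      show a₂ + (b₂ + ν) = g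
      rw [← add_assoc, hab₂]
      ring
    exact ⟨(a₂, b₂ + ν), hW, fun y hy => KEY y (a₂, b₂ + ν) hy hW⟩
  · have hW : ((a, b) : ZMod M × ZMod M).1 ∈ A ∧
        ((a, b) : ZMod M × ZMod M).2 ∈ (B \ D) ∪ D.image (fun x => x + ν) ∧
        ((a, b) : ZMod M × ZMod M).1 + ((a, b) : ZMod M × ZMod M).2 = g :=
      ⟨ha, Finset.mem_union.mpr (Or.inl (Finset.mem_sdiff.mpr ⟨hb, hbD⟩)), hab⟩
    exact ⟨(a, b), hW, fun y hy => KEY y (a, b) hy hW⟩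
end

section
/- Let p < q < r be primes and M = p²q²r². Suppose A ⊆ ℤ_M with |A| = pqr, p ∉ Div(A), {p²qr, p²q²r, p²qr²} ∩ Div(A) = ∅, and for every residue i mod p, |C^p_i(A)| = qr. Then for each i, all elements of C^p_i(A) are congruent to each other modulo p². -/
open Finset

/- ### Auxiliary number-theoretic lemmas -/

lemma aux_dvd_sub_val_iff {M : ℕ} [NeZero M] {d : ℕ} (hd : d ∣ M) (x y : ZMod M) :
    d ∣ (x - y).val ↔ x.val % d = y.val % d := by
  haveI : NeZero d := ⟨fun h => NeZero.ne M (Nat.eq_zero_of_zero_dvd (h ▸ hd))⟩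
  have key : ((x - y).val : ZMod d) = (x.val : ZMod d) - (y.val : ZMod d) := by
    rw [ZMod.natCast_val, ZMod.natCast_val, ZMod.natCast_val,
      ← ZMod.castHom_apply (h := hd) (x - y), ← ZMod.castHom_apply (h := hd) x,
      ← ZMod.castHom_apply (h := hd) y, map_sub]
  constructor
  · intro h
    have h0 : ((x - y).val : ZMod d) = 0 := (ZMod.natCast_eq_zero_iff _ _).2 h
    rw [key, sub_eq_zero] at h0
    exact (ZMod.natCast_eq_natCast_iff _ _ _).1 h0
  · intro h
    have h0 : (x.val : ZMod d) = (y.val : ZMod d) := (ZMod.natCast_eq_natCast_iff _ _ _).2 h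
    rw [← sub_eq_zero, ← key] at h0
    exact (ZMod.natCast_eq_zero_iff _ _).1 h0

lemma aux_gcd_decomp {p q r : ℕ} (hp : p.Prime) (hq : q.Prime) (hr : r.Prime)
    (hpq : p ≠ q) (hpr : p ≠ r) (hqr : q ≠ r) (v : ℕ) :
    Nat.gcd v (p ^ 2 * q ^ 2 * r ^ 2)
      = Nat.gcd v (p ^ 2) * Nat.gcd v (q ^ 2) * Nat.gcd v (r ^ 2) := by
  have c1 : (q ^ 2).Coprime (r ^ 2) :=
    Nat.Coprime.pow 2 2 ((Nat.coprime_primes hq hr).2 hqr)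
  have c2 : (p ^ 2).Coprime (q ^ 2 * r ^ 2) :=
    Nat.Coprime.mul_right (Nat.Coprime.pow 2 2 ((Nat.coprime_primes hp hq).2 hpq))
      (Nat.Coprime.pow 2 2 ((Nat.coprime_primes hp hr).2 hpr))
  rw [mul_assoc, Nat.Coprime.gcd_mul v c2, Nat.Coprime.gcd_mul v c1, mul_assoc]

lemma aux_gcd_sq_of_dvd_not_dvd {p v : ℕ} (hp : p.Prime) (h1 : p ∣ v)
    (h2 : ¬ p ^ 2 ∣ v) : Nat.gcd v (p ^ 2) = p := by
  obtain ⟨k, hk, he⟩ := (Nat.dvd_prime_pow hp).1 (Nat.gcd_dvd_right v (p ^ 2))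
  interval_cases k
  · exfalso
    have hd : p ∣ Nat.gcd v (p ^ 2) := Nat.dvd_gcd h1 (dvd_pow_self p two_ne_zero)
    rw [he] at hd
    have := Nat.le_of_dvd one_pos (by simpa using hd)
    have := hp.two_le
    omega
  · simpa using he
  · exact absurd (he ▸ Nat.gcd_dvd_left v (p ^ 2)) h2

lemma aux_gcd_sq_of_not_dvd {q v : ℕ} (hq : q.Prime) (h : ¬ q ∣ v) :
    Nat.gcd v (q ^ 2) = 1 :=
  Nat.Coprime.gcd_eq_one (Nat.Coprime.pow_right 2 ((hq.coprime_iff_not_dvd.2 h).symm))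

lemma aux_gcd_sq_of_dvd {q v : ℕ} (hq : q.Prime) (h : q ∣ v) :
    Nat.gcd v (q ^ 2) = q ∨ Nat.gcd v (q ^ 2) = q ^ 2 := by
  obtain ⟨k, hk, he⟩ := (Nat.dvd_prime_pow hq).1 (Nat.gcd_dvd_right v (q ^ 2))
  interval_cases k
  · exfalso
    have hd : q ∣ Nat.gcd v (q ^ 2) := Nat.dvd_gcd h (dvd_pow_self q two_ne_zero)
    rw [he] at hd
    have := Nat.le_of_dvd one_pos (by simpa using hd)
    have := hq.two_le
    omega
  · left; simpa using he
  · right; exact he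

/- ### Auxiliary combinatorial lemmas -/

lemma aux_card_le_of_inj_lt {α : Type*} (T : Finset α) (f : α → ℕ) (n : ℕ)
    (hlt : ∀ t ∈ T, f t < n) (hinj : ∀ t ∈ T, ∀ u ∈ T, f t = f u → t = u) :
    T.card ≤ n := by
  have h := Finset.card_le_card_of_injOn f
    (fun t ht => Finset.mem_range.2 (hlt t ht))
    (fun a ha b hb hfab => hinj a (by simpa using ha) b (by simpa using hb) hfab)
  simpa using h

lemma aux_rowcol {α : Type*} (T : Finset α) (fq fr : α → ℕ)
    (h : ∀ t ∈ T, ∀ u ∈ T, fq t = fq u ∨ fr t = fr u) :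
    (∀ t ∈ T, ∀ u ∈ T, fq t = fq u) ∨ (∀ t ∈ T, ∀ u ∈ T, fr t = fr u) := by
  by_cases h1 : ∀ t ∈ T, ∀ u ∈ T, fq t = fq u
  · exact Or.inl h1
  push_neg at h1
  obtain ⟨t0, ht0, u0, hu0, hne⟩ := h1
  have hr0 : fr t0 = fr u0 := (h t0 ht0 u0 hu0).resolve_left hne
  right
  have key : ∀ t ∈ T, fr t = fr t0 := by
    intro t ht
    rcases h t ht t0 ht0 with h2 | h2
    · rcases h t ht u0 hu0 with h3 | h3
      · exact absurd (h2.symm.trans h3) hne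
      · rw [h3, ← hr0]
    · exact h2
  intro t ht u hu
  rw [key t ht, key u hu]

lemma aux_combo {α : Type*} [DecidableEq α] (C : Finset α) (f2 fq fr : α → ℕ)
    (p q r : ℕ) (hp2 : 2 ≤ p) (hpq : p < q) (hqr : q < r)
    (hcard : C.card = q * r)
    (himg : (C.image f2).card ≤ p)
    (hfq : ∀ a ∈ C, fq a < q) (hfr : ∀ a ∈ C, fr a < r)
    (hCR : ∀ a ∈ C, ∀ b ∈ C, f2 a ≠ f2 b → fq a = fq b ∨ fr a = fr b)
    (hWR : ∀ a ∈ C, ∀ b ∈ C, a ≠ b → f2 a = f2 b → fq a = fq b → fr a ≠ fr b)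
    (hk : ∃ a ∈ C, ∃ b ∈ C, f2 a ≠ f2 b) : False := by
  classical
  by_cases hA : ∃ a ∈ C, ∃ b ∈ C, a ≠ b ∧ f2 a = f2 b ∧ fq a ≠ fq b ∧ fr a ≠ fr b
  · -- Some p²-subclass contains two elements differing both mod q and mod r.
    obtain ⟨a, ha, b, hb, hab, h2ab, hqab, hrab⟩ := hA
    set S := C.filter (fun t => f2 t = f2 a) with hSdef
    set T := C \ S with hTdef
    have hSC : S ⊆ C := filter_subset _ _
    have hTmem : ∀ t, t ∈ T ↔ t ∈ C ∧ f2 t ≠ f2 a := by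
      intro t
      simp only [hTdef, hSdef, mem_sdiff, mem_filter]
      tauto
    have ht : ∀ t ∈ T, (fq t = fq a ∧ fr t = fr b) ∨ (fq t = fq b ∧ fr t = fr a) := by
      intro t htT
      obtain ⟨htC, htne⟩ := (hTmem t).1 htT
      have h1 := hCR t htC a ha htne
      have h2 := hCR t htC b hb (by rw [← h2ab]; exact htne)
      rcases h1 with h1 | h1 <;> rcases h2 with h2 | h2
      · exact absurd (h1.symm.trans h2) hqab
      · exact Or.inl ⟨h1, h2⟩
      · exact Or.inr ⟨h2, h1⟩
      · exact absurd (h1.symm.trans h2) hrab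
    -- T is nonempty
    obtain ⟨a0, ha0, b0, hb0, hne0⟩ := hk
    have hTne : T.Nonempty := by
      by_cases hca : f2 a0 = f2 a
      · exact ⟨b0, (hTmem b0).2 ⟨hb0, fun h => hne0 (hca.trans h.symm)⟩⟩
      · exact ⟨a0, (hTmem a0).2 ⟨ha0, hca⟩⟩
    obtain ⟨c, hcT⟩ := hTne
    have hcC : c ∈ C := ((hTmem c).1 hcT).1
    have hcne : f2 c ≠ f2 a := ((hTmem c).1 hcT).2
    -- |S| ≤ q + r
    have hSbound : S.card ≤ q + r := by
      have hsub : S ⊆ S.filter (fun t => fq t = fq c) ∪ S.filter (fun t => fr t = fr c) := by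
        intro t htS
        have htC := hSC htS
        have h2t : f2 t = f2 a := (mem_filter.1 htS).2
        rcases hCR t htC c hcC (by rw [h2t]; exact fun h => hcne h.symm) with h | h
        · exact mem_union_left _ (mem_filter.2 ⟨htS, h⟩)
        · exact mem_union_right _ (mem_filter.2 ⟨htS, h⟩)
      have h1 : (S.filter (fun t => fq t = fq c)).card ≤ r := by
        apply aux_card_le_of_inj_lt _ fr
        · intro t htf
          exact hfr t (hSC (mem_filter.1 htf).1)
        · intro t htf u huf hfru
          by_contra hne
          obtain ⟨htS, htc⟩ := mem_filter.1 htf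
          obtain ⟨huS, huc⟩ := mem_filter.1 huf
          exact hWR t (hSC htS) u (hSC huS) hne
            ((mem_filter.1 htS).2.trans (mem_filter.1 huS).2.symm)
            (htc.trans huc.symm) hfru
      have h2 : (S.filter (fun t => fr t = fr c)).card ≤ q := by
        apply aux_card_le_of_inj_lt _ fq
        · intro t htf
          exact hfq t (hSC (mem_filter.1 htf).1)
        · intro t htf u huf hfqu
          by_contra hne
          obtain ⟨htS, htc⟩ := mem_filter.1 htf
          obtain ⟨huS, huc⟩ := mem_filter.1 huf
          exact hWR t (hSC htS) u (hSC huS) hne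
            ((mem_filter.1 htS).2.trans (mem_filter.1 huS).2.symm)
            hfqu (htc.trans huc.symm)
      calc S.card ≤ (S.filter (fun t => fq t = fq c) ∪ S.filter (fun t => fr t = fr c)).card :=
              card_le_card hsub
        _ ≤ (S.filter (fun t => fq t = fq c)).card + (S.filter (fun t => fr t = fr c)).card :=
              card_union_le _ _
        _ ≤ r + q := Nat.add_le_add h1 h2
        _ = q + r := Nat.add_comm r q
    -- |T| ≤ p
    have hTbound : T.card ≤ p := by
      set P1 := T.filter (fun t => fq t = fq a) with hP1def
      set P2 := T.filter (fun t => fq t = fq b) with hP2def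
      have hcover : T ⊆ P1 ∪ P2 := by
        intro t htT
        rcases ht t htT with h | h
        · exact mem_union_left _ (mem_filter.2 ⟨htT, h.1⟩)
        · exact mem_union_right _ (mem_filter.2 ⟨htT, h.1⟩)
      have hP1c : ∀ t ∈ P1, fq t = fq a ∧ fr t = fr b := by
        intro t htP
        obtain ⟨htT, htq⟩ := mem_filter.1 htP
        rcases ht t htT with h | h
        · exact h
        · exact absurd (htq.symm.trans h.1) hqab
      have hP2c : ∀ t ∈ P2, fq t = fq b ∧ fr t = fr a := by
        intro t htP
        obtain ⟨htT, htq⟩ := mem_filter.1 htP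
        rcases ht t htT with h | h
        · exact absurd (htq.symm.trans h.1) (fun hh => hqab hh.symm)
        · exact h
      have hTCsub : ∀ t ∈ T, t ∈ C := fun t htT => ((hTmem t).1 htT).1
      by_cases hP1ne : P1.Nonempty
      · by_cases hP2ne : P2.Nonempty
        · -- both nonempty: each has at most one element
          obtain ⟨u1, hu1⟩ := hP1ne
          obtain ⟨u2, hu2⟩ := hP2ne
          have key12 : ∀ t ∈ P1, ∀ u ∈ P2, f2 t = f2 u := by
            intro t htP u huP
            by_contra hne
            rcases hCR t (hTCsub t (mem_filter.1 htP).1) u (hTCsub u (mem_filter.1 huP).1) hne with h | h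
            · exact hqab (((hP1c t htP).1.symm.trans h).trans (hP2c u huP).1)
            · exact hrab ((hP2c u huP).2.symm.trans (h.symm.trans (hP1c t htP).2))
          have hc1 : P1.card ≤ 1 := by
            refine card_le_one.2 (fun t htP u huP => ?_)
            by_contra hne
            have h2tu : f2 t = f2 u := (key12 t htP u2 hu2).trans (key12 u huP u2 hu2).symm
            exact hWR t (hTCsub t (mem_filter.1 htP).1) u (hTCsub u (mem_filter.1 huP).1)
              hne h2tu ((hP1c t htP).1.trans (hP1c u huP).1.symm)
              ((hP1c t htP).2.trans (hP1c u huP).2.symm)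
          have hc2 : P2.card ≤ 1 := by
            refine card_le_one.2 (fun t htP u huP => ?_)
            by_contra hne
            have h2tu : f2 t = f2 u :=
              ((key12 u1 hu1 t htP).symm.trans (key12 u1 hu1 u huP))
            exact hWR t (hTCsub t (mem_filter.1 htP).1) u (hTCsub u (mem_filter.1 huP).1)
              hne h2tu ((hP2c t htP).1.trans (hP2c u huP).1.symm)
              ((hP2c t htP).2.trans (hP2c u huP).2.symm)
          calc T.card ≤ (P1 ∪ P2).card := card_le_card hcover
            _ ≤ P1.card + P2.card := card_union_le _ _
            _ ≤ 1 + 1 := Nat.add_le_add hc1 hc2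
            _ ≤ p := hp2
        · -- P2 empty: T ⊆ P1, f2 injective on P1
          have hTP1 : T ⊆ P1 := by
            intro t htT
            rcases (mem_union.1 (hcover htT)) with h | h
            · exact h
            · exact absurd ⟨t, h⟩ hP2ne
          have hinj : ∀ t ∈ P1, ∀ u ∈ P1, f2 t = f2 u → t = u := by
            intro t htP u huP h2tu
            by_contra hne
            exact hWR t (hTCsub t (mem_filter.1 htP).1) u (hTCsub u (mem_filter.1 huP).1)
              hne h2tu ((hP1c t htP).1.trans (hP1c u huP).1.symm)
              ((hP1c t htP).2.trans (hP1c u huP).2.symm)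
          have himgsub : P1.image f2 ⊆ C.image f2 := by
            apply image_subset_image
            intro t htP
            exact hTCsub t (mem_filter.1 htP).1
          calc T.card ≤ P1.card := card_le_card hTP1
            _ = (P1.image f2).card := (card_image_of_injOn
                  (fun t htP u huP h => hinj t (by simpa using htP) u (by simpa using huP) h)).symm
            _ ≤ (C.image f2).card := card_le_card himgsub
            _ ≤ p := himg
      · -- P1 empty: T ⊆ P2, f2 injective on P2
        have hTP2 : T ⊆ P2 := by
          intro t htT
          rcases (mem_union.1 (hcover htT)) with h | h
          · exact absurd ⟨t, h⟩ hP1ne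
          · exact h
        have hinj : ∀ t ∈ P2, ∀ u ∈ P2, f2 t = f2 u → t = u := by
          intro t htP u huP h2tu
          by_contra hne
          exact hWR t (hTCsub t (mem_filter.1 htP).1) u (hTCsub u (mem_filter.1 huP).1)
            hne h2tu ((hP2c t htP).1.trans (hP2c u huP).1.symm)
            ((hP2c t htP).2.trans (hP2c u huP).2.symm)
        have himgsub : P2.image f2 ⊆ C.image f2 := by
          apply image_subset_image
          intro t htP
          exact hTCsub t (mem_filter.1 htP).1
        calc T.card ≤ P2.card := card_le_card hTP2
          _ = (P2.image f2).card := (card_image_of_injOn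
                (fun t htP u huP h => hinj t (by simpa using htP) u (by simpa using huP) h)).symm
          _ ≤ (C.image f2).card := card_le_card himgsub
          _ ≤ p := himg
    -- conclude
    have hsplit : T.card + S.card = C.card := card_sdiff_add_card_eq_card hSC
    have : q * r ≤ (q + r) + p := by
      rw [← hcard, ← hsplit]
      omega
    nlinarith
  · -- Every subclass is a "row" or "column"
    push_neg at hA
    have hfiber : ∀ j ∈ C.image f2, (C.filter (fun t => f2 t = j)).card ≤ r := by
      intro j _
      set T := C.filter (fun t => f2 t = j) with hTdef
      have hTC : T ⊆ C := filter_subset _ _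
      have hagree : ∀ t ∈ T, ∀ u ∈ T, fq t = fq u ∨ fr t = fr u := by
        intro t htT u huT
        by_cases hteq : t = u
        · exact Or.inl (by rw [hteq])
        by_cases hfqe : fq t = fq u
        · exact Or.inl hfqe
        · exact Or.inr (hA t (hTC htT) u (hTC huT) hteq
            ((mem_filter.1 htT).2.trans (mem_filter.1 huT).2.symm) hfqe)
      rcases aux_rowcol T fq fr hagree with hall | hall
      · -- all same fq: fr injective on T
        apply aux_card_le_of_inj_lt _ fr
        · intro t htT; exact hfr t (hTC htT)
        · intro t htT u huT hfre
          by_contra hne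
          exact hWR t (hTC htT) u (hTC huT) hne
            ((mem_filter.1 htT).2.trans (mem_filter.1 huT).2.symm)
            (hall t htT u huT) hfre
      · -- all same fr: fq injective on T
        have : T.card ≤ q := by
          apply aux_card_le_of_inj_lt _ fq
          · intro t htT; exact hfq t (hTC htT)
          · intro t htT u huT hfqe
            by_contra hne
            exact hWR t (hTC htT) u (hTC huT) hne
              ((mem_filter.1 htT).2.trans (mem_filter.1 huT).2.symm)
              hfqe (hall t htT u huT)
        omega
    have hle := Finset.card_le_mul_card_image (f := f2) C r hfiber
    rw [hcard] at hle
    have : q * r ≤ r * p := hle.trans (Nat.mul_le_mul_left r himg)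
    nlinarith

/-- If `|A| = pqr`, `p ∉ Div(A)`, `{p²qr, p²q²r, p²qr²} ∩ Div(A) = ∅`, and every
residue class mod `p` contains exactly `qr` elements of `A`, then within each
residue class mod `p` all elements of `A` are congruent mod `p²`. -/
theorem stmt_12 (p q r M : ℕ) (hp : p.Prime) (hq : q.Prime) (hr : r.Prime)
    (hpq : p < q) (hqr : q < r) (hM : M = p ^ 2 * q ^ 2 * r ^ 2)
    (A : Finset (ZMod M)) (hA : A.card = p * q * r)
    (hpDiv : p ∉ DivSet A)
    (hbig : ({p ^ 2 * q * r, p ^ 2 * q ^ 2 * r, p ^ 2 * q * r ^ 2} : Set ℕ)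
      ∩ DivSet A = ∅)
    (hclass : ∀ i < p, (A.filter fun x => x.val % p = i).card = q * r) :
    ∀ x ∈ A, ∀ y ∈ A, x.val % p = y.val % p → p ^ 2 ∣ (x - y).val := by
  have hppos := hp.pos
  have hqpos := hq.pos
  have hrpos := hr.pos
  have hMne : M ≠ 0 := by
    rw [hM]; positivity
  haveI : NeZero M := ⟨hMne⟩
  have hpM : p ∣ M := by
    rw [hM]; exact dvd_mul_of_dvd_left (dvd_mul_of_dvd_left (dvd_pow_self p two_ne_zero) _) _
  have hp2M : p ^ 2 ∣ M := by
    rw [hM]; exact dvd_mul_of_dvd_left (dvd_mul_right _ _) _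
  have hqM : q ∣ M := by
    rw [hM]; exact dvd_mul_of_dvd_left (dvd_mul_of_dvd_right (dvd_pow_self q two_ne_zero) _) _
  have hrM : r ∣ M := by
    rw [hM]; exact dvd_mul_of_dvd_right (dvd_pow_self r two_ne_zero) _
  have hpqne : p ≠ q := Nat.ne_of_lt hpq
  have hprne : p ≠ r := Nat.ne_of_lt (hpq.trans hqr)
  have hqrne : q ≠ r := Nat.ne_of_lt hqr
  have hforb : ∀ d ∈ ({p ^ 2 * q * r, p ^ 2 * q ^ 2 * r, p ^ 2 * q * r ^ 2} : Set ℕ),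
      d ∉ DivSet A := by
    intro d hd hdd
    have : d ∈ ({p ^ 2 * q * r, p ^ 2 * q ^ 2 * r, p ^ 2 * q * r ^ 2} : Set ℕ) ∩ DivSet A :=
      ⟨hd, hdd⟩
    rw [hbig] at this
    exact this
  intro x hx y hy hxy
  by_contra hnd
  set i := x.val % p with hidef
  have hilt : i < p := Nat.mod_lt _ hppos
  set C := A.filter (fun z => z.val % p = i) with hCdef
  have hxC : x ∈ C := mem_filter.2 ⟨hx, rfl⟩
  have hyC : y ∈ C := mem_filter.2 ⟨hy, hxy.symm⟩
  have hCA : C ⊆ A := filter_subset _ _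
  have hcardC : C.card = q * r := hclass i hilt
  -- The two key pairwise rules
  have hgcdM : ∀ w : ℕ, Nat.gcd w M
      = Nat.gcd w (p ^ 2) * Nat.gcd w (q ^ 2) * Nat.gcd w (r ^ 2) := by
    intro w
    rw [hM]
    exact aux_gcd_decomp hp hq hr hpqne hprne hqrne w
  have key1 : ∀ a ∈ C, ∀ b ∈ C, a.val % p ^ 2 ≠ b.val % p ^ 2 →
      a.val % q = b.val % q ∨ a.val % r = b.val % r := by
    intro a ha b hb hne
    have hpv : p ∣ (a - b).val := (aux_dvd_sub_val_iff hpM a b).2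
      ((mem_filter.1 ha).2.trans (mem_filter.1 hb).2.symm)
    have hp2v : ¬ p ^ 2 ∣ (a - b).val := fun h => hne ((aux_dvd_sub_val_iff hp2M a b).1 h)
    rw [← aux_dvd_sub_val_iff hqM a b, ← aux_dvd_sub_val_iff hrM a b]
    by_contra hcon
    push_neg at hcon
    apply hpDiv
    refine ⟨a, hCA ha, b, hCA hb, ?_⟩
    rw [hgcdM, aux_gcd_sq_of_dvd_not_dvd hp hpv hp2v,
      aux_gcd_sq_of_not_dvd hq hcon.1, aux_gcd_sq_of_not_dvd hr hcon.2, mul_one, mul_one]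
  have key2 : ∀ a ∈ C, ∀ b ∈ C, a ≠ b → a.val % p ^ 2 = b.val % p ^ 2 →
      a.val % q = b.val % q → a.val % r ≠ b.val % r := by
    intro a ha b hb hab h2 hqe hre
    have hvne : (a - b).val ≠ 0 := by
      rw [Ne, ZMod.val_eq_zero, sub_eq_zero]
      exact hab
    have hvlt : (a - b).val < M := ZMod.val_lt _
    have hp2v : p ^ 2 ∣ (a - b).val := (aux_dvd_sub_val_iff hp2M a b).2 h2
    have hqv : q ∣ (a - b).val := (aux_dvd_sub_val_iff hqM a b).2 hqe
    have hrv : r ∣ (a - b).val := (aux_dvd_sub_val_iff hrM a b).2 hre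
    have hgp : Nat.gcd ((a - b).val) (p ^ 2) = p ^ 2 := Nat.gcd_eq_right hp2v
    have hdec : Nat.gcd ((a - b).val) M
        = p ^ 2 * Nat.gcd ((a - b).val) (q ^ 2) * Nat.gcd ((a - b).val) (r ^ 2) := by
      rw [hgcdM, hgp]
    rcases aux_gcd_sq_of_dvd hq hqv with hgq | hgq <;>
      rcases aux_gcd_sq_of_dvd hr hrv with hgr | hgr
    · exact hforb (p ^ 2 * q * r) (by left; rfl)
        ⟨a, hCA ha, b, hCA hb, by rw [hdec, hgq, hgr]⟩
    · exact hforb (p ^ 2 * q * r ^ 2) (by right; right; rfl)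
        ⟨a, hCA ha, b, hCA hb, by rw [hdec, hgq, hgr]⟩
    · exact hforb (p ^ 2 * q ^ 2 * r) (by right; left; rfl)
        ⟨a, hCA ha, b, hCA hb, by rw [hdec, hgq, hgr]⟩
    · have hMv : M ∣ (a - b).val := by
        have := Nat.gcd_dvd_left ((a - b).val) M
        rw [hdec, hgq, hgr, ← hM] at this
        exact this
      have := Nat.le_of_dvd (Nat.pos_of_ne_zero hvne) hMv
      omega
  -- the image of C under (mod p²) has at most p values
  have himg : (C.image (fun z : ZMod M => z.val % p ^ 2)).card ≤ p := by
    have hsub : C.image (fun z : ZMod M => z.val % p ^ 2)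
        ⊆ (range p).image (fun t => i + p * t) := by
      intro j hj
      obtain ⟨a, ha, he⟩ := mem_image.1 hj
      have hmod : j % p = i := by
        rw [← he, Nat.mod_mod_of_dvd _ (dvd_pow_self p two_ne_zero)]
        exact (mem_filter.1 ha).2
      have hjlt : j < p ^ 2 := by
        rw [← he]; exact Nat.mod_lt _ (by positivity)
      refine mem_image.2 ⟨j / p, mem_range.2 ?_, ?_⟩
      · have : j < p * p := by rw [← pow_two]; exact hjlt
        exact Nat.div_lt_of_lt_mul this
      · rw [← hmod, Nat.mod_add_div j p]
    calc (C.image (fun z : ZMod M => z.val % p ^ 2)).card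
        ≤ ((range p).image (fun t => i + p * t)).card := card_le_card hsub
      _ ≤ (range p).card := card_image_le
      _ = p := card_range p
  -- the class splits into at least two subclasses mod p²
  have hxyne : x.val % p ^ 2 ≠ y.val % p ^ 2 :=
    fun h => hnd ((aux_dvd_sub_val_iff hp2M x y).2 h)
  exact aux_combo C (fun z => z.val % p ^ 2) (fun z => z.val % q) (fun z => z.val % r)
    p q r hp.two_le hpq hqr hcardC himg
    (fun a _ => Nat.mod_lt _ hqpos) (fun a _ => Nat.mod_lt _ hrpos)
    key1 key2 ⟨x, hxC, y, hyC, hxyne⟩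
end

section
/- Let p, q, r be distinct primes and let H_p, H_q ⊆ ℤ_{pqr} be disjoint with H_p + qr = H_p and H_q + rp = H_q. Then there exists r_0 ∈ {0, 1, ..., r-1} such that no element of H_p is congruent to r_0 mod r, or no element of H_q is congruent to r_0 mod r; in fact, H_p and H_q occupy disjoint sets of residues mod r. -/
open Finset

/-- If `H_p, H_q ⊆ ℤ_{pqr}` are disjoint, with `H_p + qr = H_p` and
`H_q + rp = H_q`, then `H_p` and `H_q` occupy disjoint sets of residues mod `r`;
in particular some residue `r_0` mod `r` is avoided by `H_p` or by `H_q`. -/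
theorem stmt_15 (p q r : ℕ) (hp : p.Prime) (hq : q.Prime) (hr : r.Prime)
    (hpq : p ≠ q) (hqr : q ≠ r) (hpr : p ≠ r)
    (Hp Hq : Finset (ZMod (p * q * r))) (hdisj : Disjoint Hp Hq)
    (hHp : Hp.image (fun x => x + ((q * r : ℕ) : ZMod (p * q * r))) = Hp)
    (hHq : Hq.image (fun x => x + ((r * p : ℕ) : ZMod (p * q * r))) = Hq) :
    (∀ x ∈ Hp, ∀ y ∈ Hq, x.val % r ≠ y.val % r) ∧
    ∃ r0 < r, (∀ x ∈ Hp, x.val % r ≠ r0) ∨ (∀ y ∈ Hq, y.val % r ≠ r0) := by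
  have hN : 0 < p * q * r := by
    have := hp.pos; have := hq.pos; have := hr.pos; positivity
  haveI : NeZero (p * q * r) := ⟨hN.ne'⟩
  have clos : ∀ (H : Finset (ZMod (p*q*r))) (c : ZMod (p*q*r)),
      H.image (fun x => x + c) = H → ∀ n : ℕ, ∀ x ∈ H, x + (n : ZMod (p*q*r)) * c ∈ H := by
    intro H c hH n
    induction n with
    | zero => intro x hx; simpa using hx
    | succ n ih =>
      intro x hx
      have h1 : x + c ∈ H := by
        rw [← hH]; exact mem_image_of_mem _ hx
      have h2 := ih (x + c) h1
      have : (x + c) + (n : ZMod (p*q*r)) * c = x + ((n+1 : ℕ) : ZMod (p*q*r)) * c := by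
        push_cast; ring
      rwa [this] at h2
  have closZ : ∀ (H : Finset (ZMod (p*q*r))) (c : ZMod (p*q*r)),
      H.image (fun x => x + c) = H → ∀ m : ℤ, ∀ x ∈ H, x + (m : ZMod (p*q*r)) * c ∈ H := by
    intro H c hH m x hx
    have h0 : (0:ℤ) ≤ m % (p*q*r) := Int.emod_nonneg m (by exact_mod_cast hN.ne')
    have hm : (((m % (p*q*r) : ℤ).toNat : ℕ) : ZMod (p*q*r)) = (m : ZMod (p*q*r)) := by
      have : (((m % (p*q*r) : ℤ).toNat : ℤ) : ZMod (p*q*r)) = (m : ZMod (p*q*r)) := by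
        rw [Int.toNat_of_nonneg h0, ZMod.intCast_eq_intCast_iff]
        exact Int.emod_emod_of_dvd m dvd_rfl
      exact_mod_cast this
    rw [← hm]
    exact clos H c hH _ x hx
  have main : ∀ x ∈ Hp, ∀ y ∈ Hq, x.val % r ≠ y.val % r := by
    intro x hx y hy hxy
    have hcop : IsCoprime (q:ℤ) (p:ℤ) :=
      Int.isCoprime_iff_gcd_eq_one.mpr (by
        exact_mod_cast (Nat.coprime_primes hq hp).mpr (Ne.symm hpq))
    obtain ⟨u, v, huv⟩ := hcop
    have hmod : ((x.val : ℤ)) ≡ (y.val : ℤ) [ZMOD (r:ℤ)] := by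
      unfold Int.ModEq; omega
    obtain ⟨k, hk⟩ : (r:ℤ) ∣ ((y.val : ℤ) - x.val) := Int.ModEq.dvd hmod
    have hZ : (x.val : ℤ) + (k*u)*(q*r) = (y.val : ℤ) + (-(k*v))*(r*p) := by
      linear_combination (k*r) * huv - hk
    have hcast := congrArg (fun t : ℤ => (t : ZMod (p*q*r))) hZ
    simp only [Int.cast_add, Int.cast_mul, Int.cast_natCast] at hcast
    have hxz : x + ((k*u : ℤ) : ZMod (p*q*r)) * ((q*r : ℕ) : ZMod (p*q*r)) ∈ Hp :=
      closZ Hp _ hHp (k*u) x hx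
    have hyz : y + ((-(k*v) : ℤ) : ZMod (p*q*r)) * ((r*p : ℕ) : ZMod (p*q*r)) ∈ Hq :=
      closZ Hq _ hHq (-(k*v)) y hy
    have hxv : ((x.val : ℕ) : ZMod (p*q*r)) = x := ZMod.natCast_zmod_val x
    have hyv : ((y.val : ℕ) : ZMod (p*q*r)) = y := ZMod.natCast_zmod_val y
    have heq : x + ((k*u : ℤ) : ZMod (p*q*r)) * ((q*r : ℕ) : ZMod (p*q*r))
        = y + ((-(k*v) : ℤ) : ZMod (p*q*r)) * ((r*p : ℕ) : ZMod (p*q*r)) := by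
      rw [← hxv, ← hyv]
      push_cast
      push_cast at hcast
      linear_combination hcast
    rw [heq] at hxz
    exact (Finset.disjoint_left.mp hdisj hxz) hyz
  refine ⟨main, 0, hr.pos, ?_⟩
  by_cases h : ∃ x ∈ Hp, x.val % r = 0
  · obtain ⟨x0, hx0, hx0r⟩ := h
    right
    intro y hy hy0
    exact main x0 hx0 y hy (by omega)
  · left
    intro x hx
    push_neg at h
    exact h x hx
end
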